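/- arXiv:2010.06794 — 6 statements merged into one kernel-verified Lean document; each statement's English description precedes it below -/
import Mathlib

section
/- Let P be a symmetric positive semidefinite n×n real matrix, E an n×d real matrix, g ∈ ℝⁿ, z ∈ ℝ, α ∈ (0,1) and λ > 0 such that λI − αEᵀPE is positive definite. For fixed v ∈ ℝⁿ and ŵ ∈ ℝ^d define Φ(w) = α(v+Ew)ᵀP(v+Ew) + αgᵀ(v+Ew) + αz − λ‖w−ŵ‖². Then the supremum of Φ over ℝ^d equals αvᵀPv + αgᵀv + αz − λ‖ŵ‖² − (αEᵀPv + ½αEᵀg + λŵ)ᵀ(αEᵀPE − λI)⁻¹(αEᵀPv + ½αEᵀg + λŵ). -/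
/-!
Expanding the square and the penalty writes `Φ` as the concave quadratic
`w ↦ c + 2 bᵀw − wᵀMw` with `M = λI − αEᵀPE` positive definite. Completing the square at the
solution `w₀ = M⁻¹b` of `Mw₀ = b` gives `Φ w = c + bᵀM⁻¹b − (w − w₀)ᵀM(w − w₀)`, so the supremum is
attained at `w₀` with value `c + bᵀM⁻¹b`, and `(αEᵀPE − λI)⁻¹ = −M⁻¹`.
-/

open Matrix

variable {ι : Type*} [Fintype ι]

theorem Matrix.IsSymm.dotProduct_mulVec_comm {R : Type*} [CommSemiring R] {M : Matrix ι ι R}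
    (hM : M.IsSymm) (x y : ι → R) : x ⬝ᵥ (M *ᵥ y) = y ⬝ᵥ (M *ᵥ x) := by
  rw [dotProduct_mulVec, ← mulVec_transpose, hM.eq, dotProduct_comm]

theorem Matrix.inv_neg_of_isUnit_det [DecidableEq ι] {R : Type*} [CommRing R]
    {M : Matrix ι ι R} (hM : IsUnit M.det) : (-M)⁻¹ = -M⁻¹ :=
  inv_eq_right_inv (by rw [Matrix.neg_mul, Matrix.mul_neg, neg_neg, mul_nonsing_inv M hM])

theorem quadratic_eq_sub_of_mulVec_eq {R : Type*} [CommRing R] {M : Matrix ι ι R}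
    (hM : M.IsSymm) {b w₀ : ι → R} (hw₀ : M *ᵥ w₀ = b) (c : R) (w : ι → R) :
    c + 2 * (b ⬝ᵥ w) - w ⬝ᵥ (M *ᵥ w) = c + b ⬝ᵥ w₀ - (w - w₀) ⬝ᵥ (M *ᵥ (w - w₀)) := by
  simp only [mulVec_sub, dotProduct_sub, sub_dotProduct, hM.dotProduct_mulVec_comm w₀ w, hw₀,
    dotProduct_comm w b, dotProduct_comm w₀ b]
  ring

theorem ciSup_quadratic_of_posDef [DecidableEq ι] {M : Matrix ι ι ℝ} (hM : M.PosDef)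
    (b : ι → ℝ) (c : ℝ) :
    ⨆ w, (c + 2 * (b ⬝ᵥ w) - w ⬝ᵥ (M *ᵥ w)) = c + b ⬝ᵥ (M⁻¹ *ᵥ b) := by
  have hdet : IsUnit M.det := (isUnit_iff_isUnit_det M).mp hM.isUnit
  set w₀ := M⁻¹ *ᵥ b
  have hw₀ : M *ᵥ w₀ = b := by rw [mulVec_mulVec, mul_nonsing_inv M hdet, one_mulVec]
  simp_rw [quadratic_eq_sub_of_mulVec_eq (isHermitian_iff_isSymm.mp hM.isHermitian) hw₀ c]
  have hle : ∀ w, c + b ⬝ᵥ w₀ - (w - w₀) ⬝ᵥ (M *ᵥ (w - w₀)) ≤ c + b ⬝ᵥ w₀ := fun w ↦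
    sub_le_self _ (by simpa using hM.posSemidef.dotProduct_mulVec_nonneg (w - w₀))
  refine le_antisymm (ciSup_le hle) (le_ciSup_of_le ⟨_, Set.forall_mem_range.mpr hle⟩ w₀ ?_)
  simp

theorem objective_eq_quadratic {m : Type*} [Fintype m] [DecidableEq ι]
    {P : Matrix m m ℝ} (hP : P.IsSymm) (E : Matrix m ι ℝ) (g v : m → ℝ) (ŵ : ι → ℝ)
    (z α lam : ℝ) (w : ι → ℝ) :
    α * ((v + E *ᵥ w) ⬝ᵥ (P *ᵥ (v + E *ᵥ w))) + α * (g ⬝ᵥ (v + E *ᵥ w)) + α * z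
        - lam * ((w - ŵ) ⬝ᵥ (w - ŵ)) =
      (α * (v ⬝ᵥ (P *ᵥ v)) + α * (g ⬝ᵥ v) + α * z - lam * (ŵ ⬝ᵥ ŵ))
        + 2 * ((α • (Eᵀ *ᵥ (P *ᵥ v)) + (α / 2) • (Eᵀ *ᵥ g) + lam • ŵ) ⬝ᵥ w)
        - w ⬝ᵥ ((lam • (1 : Matrix ι ι ℝ) - α • (Eᵀ * P * E)) *ᵥ w) := by
  have hE : ∀ x : m → ℝ, x ⬝ᵥ (E *ᵥ w) = (Eᵀ *ᵥ x) ⬝ᵥ w := fun x ↦ by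
    rw [mulVec_transpose, ← dotProduct_mulVec]
  have hEPE : (E *ᵥ w) ⬝ᵥ (P *ᵥ (E *ᵥ w)) = w ⬝ᵥ ((Eᵀ * P * E) *ᵥ w) := by
    rw [dotProduct_comm, hE, ← mulVec_mulVec, ← mulVec_mulVec, dotProduct_comm]
  simp only [mulVec_add, dotProduct_add, add_dotProduct, dotProduct_sub, sub_dotProduct,
    sub_mulVec, smul_mulVec, one_mulVec, dotProduct_smul, smul_dotProduct, smul_eq_mul,
    hEPE, hP.dotProduct_mulVec_comm v, hE, dotProduct_comm w ŵ, dotProduct_comm (E *ᵥ w)]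
  ring

theorem stmt1_general {n d : ℕ} (P : Matrix (Fin n) (Fin n) ℝ) (E : Matrix (Fin n) (Fin d) ℝ)
    (g : Fin n → ℝ) (z : ℝ) (α lam : ℝ)
    (hP : P.PosSemidef)
    (hpd : (lam • (1 : Matrix (Fin d) (Fin d) ℝ) - α • (Eᵀ * P * E)).PosDef)
    (v : Fin n → ℝ) (what : Fin d → ℝ)
    (Φ : (Fin d → ℝ) → ℝ)
    (hΦ : Φ = fun w => α * ((v + E *ᵥ w) ⬝ᵥ (P *ᵥ (v + E *ᵥ w)))
        + α * (g ⬝ᵥ (v + E *ᵥ w)) + α * z - lam * ((w - what) ⬝ᵥ (w - what))) :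
    (⨆ w : Fin d → ℝ, Φ w) =
      α * (v ⬝ᵥ (P *ᵥ v)) + α * (g ⬝ᵥ v) + α * z - lam * (what ⬝ᵥ what)
        - (α • (Eᵀ *ᵥ (P *ᵥ v)) + (α / 2) • (Eᵀ *ᵥ g) + lam • what) ⬝ᵥ
            ((α • (Eᵀ * P * E) - lam • (1 : Matrix (Fin d) (Fin d) ℝ))⁻¹ *ᵥ
              (α • (Eᵀ *ᵥ (P *ᵥ v)) + (α / 2) • (Eᵀ *ᵥ g) + lam • what)) := by
  subst hΦ
  simp_rw [objective_eq_quadratic (isHermitian_iff_isSymm.mp hP.isHermitian)]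
  rw [ciSup_quadratic_of_posDef hpd, ← neg_sub (lam • (1 : Matrix (Fin d) (Fin d) ℝ)),
    inv_neg_of_isUnit_det ((isUnit_iff_isUnit_det _).mp hpd.isUnit), neg_mulVec,
    dotProduct_neg, sub_neg_eq_add]

/-- closed form of the supremum of
`Φ(w) = α(v+Ew)ᵀP(v+Ew) + αgᵀ(v+Ew) + αz − λ‖w−ŵ‖²` over `w ∈ ℝ^d`. -/
theorem stmt1 {n d : ℕ} (P : Matrix (Fin n) (Fin n) ℝ) (E : Matrix (Fin n) (Fin d) ℝ)
    (g : Fin n → ℝ) (z : ℝ) (α lam : ℝ) (hα : α ∈ Set.Ioo (0 : ℝ) 1) (hlam : 0 < lam)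
    (hP : P.PosSemidef)
    (hpd : (lam • (1 : Matrix (Fin d) (Fin d) ℝ) - α • (Eᵀ * P * E)).PosDef)
    (v : Fin n → ℝ) (what : Fin d → ℝ)
    (Φ : (Fin d → ℝ) → ℝ)
    (hΦ : Φ = fun w => α * ((v + E *ᵥ w) ⬝ᵥ (P *ᵥ (v + E *ᵥ w)))
        + α * (g ⬝ᵥ (v + E *ᵥ w)) + α * z - lam * ((w - what) ⬝ᵥ (w - what))) :
    (⨆ w : Fin d → ℝ, Φ w) =
      α * (v ⬝ᵥ (P *ᵥ v)) + α * (g ⬝ᵥ v) + α * z - lam * (what ⬝ᵥ what)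
        - (α • (Eᵀ *ᵥ (P *ᵥ v)) + (α / 2) • (Eᵀ *ᵥ g) + lam • what) ⬝ᵥ
            ((α • (Eᵀ * P * E) - lam • (1 : Matrix (Fin d) (Fin d) ℝ))⁻¹ *ᵥ
              (α • (Eᵀ *ᵥ (P *ᵥ v)) + (α / 2) • (Eᵀ *ᵥ g) + lam • what)) :=
  stmt1_general P E g z α lam hP hpd v what Φ hΦ
end

section
/- Let A be an n×n, B an n×m, and E an n×d real matrix; Q a symmetric positive semidefinite n×n matrix, R a symmetric positive definite m×m matrix, α ∈ (0,1), λ > 0; let P be a symmetric positive semidefinite n×n matrix with λI − αEᵀPE positive definite, g ∈ ℝⁿ, and ŵ⁽¹⁾,…,ŵ⁽ᴺ⁾ ∈ ℝ^d with sample mean w̄ = (1/N)Σ_{j=1}^N ŵ⁽ʲ⁾. Define H_xx = Q + αAᵀPA, H_xu = αAᵀPB, H_xw = αAᵀPE, H_uu = R + αBᵀPB, H_uw = αBᵀPE, H_ww = αEᵀPE − λI, G_u = αBᵀg, G_w = αEᵀg + 2λw̄. Fix x ∈ ℝⁿ and define F(u) = xᵀQx + uᵀRu + (1/N)Σ_{j=1}^N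 sup_{w∈ℝ^d} [ α(Ax+Bu+Ew)ᵀP(Ax+Bu+Ew) + αgᵀ(Ax+Bu+Ew) − λ‖w−ŵ⁽ʲ⁾‖² ]. Then F is strictly convex on ℝ^m and has the unique minimizer u* = Kx + r, where K = (H_uu − H_uw H_ww⁻¹ H_uwᵀ)⁻¹ (H_uw H_ww⁻¹ H_xwᵀ − H_xuᵀ) and r = −½ (H_uu − H_uw H_ww⁻¹ H_uwᵀ)⁻¹ (G_u − H_uw H_ww⁻¹ G_w). -/
/-!
For fixed `u`, the `j`-th integrand is a quadratic in `w` with quadratic part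
`H_ww = αEᵀPE - λI`, which is negative definite; completing the square, its supremum is attained
and equals a quadratic in `u` whose quadratic part is `αBᵀPB - H_uw H_ww⁻¹ H_uwᵀ`. Averaging over
the samples, `F u = uᵀSu + tᵀu + C` with the Schur complement `S = H_uu - H_uw H_ww⁻¹ H_uwᵀ`
(positive definite because `R` is) and `t = 2(H_xuᵀ - H_uw H_ww⁻¹ H_xwᵀ)x + G_u - H_uw H_ww⁻¹ G_w`.
Such a quadratic is strictly convex, and completing the square once more shows that it is
minimized exactly at the solution of `S u = -t/2`, which is `Kx + r`.
-/

open Matrix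

namespace Matrix

variable {ι κ ν : Type*}

lemma PosSemidef.transpose_eq_self {M : Matrix ι ι ℝ} (hM : M.PosSemidef) : Mᵀ = M :=
  (isHermitian_iff_isSymm.mp hM.isHermitian).eq

variable [Fintype ι] [Fintype κ] [Fintype ν]

lemma dotProduct_mulVec_comm_of_transpose_eq {M : Matrix ι ι ℝ} (hM : Mᵀ = M) (v w : ι → ℝ) :
    v ⬝ᵥ M *ᵥ w = w ⬝ᵥ M *ᵥ v := by
  rw [← dotProduct_transpose_mulVec, hM]

lemma mulVec_dotProduct (X : Matrix ι κ ℝ) (a : κ → ℝ) (z : ι → ℝ) :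
    (X *ᵥ a) ⬝ᵥ z = a ⬝ᵥ Xᵀ *ᵥ z := by
  rw [dotProduct_transpose_mulVec, dotProduct_comm]

lemma add_dotProduct_mulVec_add {M : Matrix ι ι ℝ} (hM : Mᵀ = M) (v w : ι → ℝ) :
    (v + w) ⬝ᵥ M *ᵥ (v + w) = v ⬝ᵥ M *ᵥ v + 2 * (v ⬝ᵥ M *ᵥ w) + w ⬝ᵥ M *ᵥ w := by
  rw [mulVec_add, dotProduct_add, add_dotProduct, add_dotProduct,
    dotProduct_mulVec_comm_of_transpose_eq hM w v]
  ring

lemma dotProduct_mulVec_add_dotProduct_eq {M : Matrix ι ι ℝ} (hM : Mᵀ = M) {b w₀ : ι → ℝ}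
    (hw₀ : M *ᵥ w₀ = -(1 / 2 : ℝ) • b) (w : ι → ℝ) :
    w ⬝ᵥ M *ᵥ w + b ⬝ᵥ w = (w - w₀) ⬝ᵥ M *ᵥ (w - w₀) - w₀ ⬝ᵥ M *ᵥ w₀ := by
  have hb : ∀ v, v ⬝ᵥ M *ᵥ w₀ = -(1 / 2 : ℝ) * (b ⬝ᵥ v) := fun v => by
    rw [hw₀, dotProduct_smul, smul_eq_mul, dotProduct_comm]
  have := add_dotProduct_mulVec_add hM w (-w₀)
  simp only [← sub_eq_add_neg, mulVec_neg, dotProduct_neg, neg_dotProduct, neg_neg] at this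
  rw [this, hb, hb]
  ring

lemma strictConvexOn_quadratic {S : Matrix κ κ ℝ} (hS : S.PosDef) (t : κ → ℝ) (c : ℝ) :
    StrictConvexOn ℝ Set.univ fun u => u ⬝ᵥ S *ᵥ u + t ⬝ᵥ u + c := by
  have hSt := hS.posSemidef.transpose_eq_self
  refine ⟨convex_univ, fun u _ v _ huv a b ha hb hab => ?_⟩
  have hpos := hS.dotProduct_mulVec_pos (sub_ne_zero.mpr huv)
  have hdiff := add_dotProduct_mulVec_add hSt u (-v)
  simp only [star_trivial, ← sub_eq_add_neg, mulVec_neg, dotProduct_neg, neg_dotProduct,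
    neg_neg] at hpos hdiff
  simp only [add_dotProduct_mulVec_add hSt, dotProduct_add, smul_dotProduct, dotProduct_smul,
    mulVec_smul, smul_eq_mul]
  -- `a f u + b f v - f (a • u + b • v) = a b (u - v)ᵀ S (u - v)` when `a + b = 1`
  obtain rfl : b = 1 - a := by linarith
  nlinarith [mul_pos (mul_pos ha hb) hpos]

lemma quadratic_lt_of_mulVec_eq {S : Matrix κ κ ℝ} (hS : S.PosDef) {t u₀ : κ → ℝ}
    (hu₀ : S *ᵥ u₀ = -(1 / 2 : ℝ) • t) (c : ℝ) {u : κ → ℝ} (hu : u ≠ u₀) :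
    u₀ ⬝ᵥ S *ᵥ u₀ + t ⬝ᵥ u₀ + c < u ⬝ᵥ S *ᵥ u + t ⬝ᵥ u + c := by
  have hSt := hS.posSemidef.transpose_eq_self
  have hpos := hS.dotProduct_mulVec_pos (sub_ne_zero.mpr hu)
  simp only [star_trivial] at hpos
  rw [dotProduct_mulVec_add_dotProduct_eq hSt hu₀, dotProduct_mulVec_add_dotProduct_eq hSt hu₀,
    sub_self, zero_dotProduct]
  linarith

lemma strictConvexOn_isMinOn_quadratic {S : Matrix κ κ ℝ} (hS : S.PosDef) {t u₀ : κ → ℝ}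
    (hu₀ : S *ᵥ u₀ = -(1 / 2 : ℝ) • t) {c : ℝ} {f : (κ → ℝ) → ℝ}
    (hf : ∀ u, f u = u ⬝ᵥ S *ᵥ u + t ⬝ᵥ u + c) :
    StrictConvexOn ℝ Set.univ f ∧ IsMinOn f Set.univ u₀ ∧ ∀ u, u ≠ u₀ → f u₀ < f u := by
  obtain rfl : f = _ := funext hf
  have hlt : ∀ u, u ≠ u₀ → _ := fun u hu => quadratic_lt_of_mulVec_eq hS hu₀ c hu
  refine ⟨strictConvexOn_quadratic hS t c, isMinOn_univ_iff.mpr fun u => ?_, hlt⟩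
  rcases eq_or_ne u u₀ with rfl | hu
  exacts [le_rfl, (hlt u hu).le]

lemma one_div_mul_sum_add_dotProduct {N : ℕ} (hN : 0 < N) (q : ℝ) (L : Matrix κ ι ℝ)
    (a : κ → ℝ) (b : Fin N → ι → ℝ) (c : Fin N → ℝ) (u : κ → ℝ) :
    1 / (N : ℝ) * ∑ j, (q + (a - L *ᵥ b j) ⬝ᵥ u + c j)
      = q + (a - L *ᵥ ((1 / (N : ℝ)) • ∑ j, b j)) ⬝ᵥ u + 1 / (N : ℝ) * ∑ j, c j := by
  have hN' : (N : ℝ) ≠ 0 := by positivity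
  simp only [Finset.sum_add_distrib, Finset.sum_const, Finset.card_univ, Fintype.card_fin,
    ← Nat.cast_smul_eq_nsmul ℝ, ← sum_dotProduct, Finset.sum_sub_distrib, mulVec_smul, mulVec_sum,
    sub_dotProduct, smul_dotProduct, smul_eq_mul, mul_add, mul_sub]
  field_simp

variable [DecidableEq ι]

lemma ciSup_dotProduct_mulVec_add {M : Matrix ι ι ℝ} (hM : (-M).PosDef) (b : ι → ℝ) (c : ℝ) :
    ⨆ w, (w ⬝ᵥ M *ᵥ w + b ⬝ᵥ w + c) = c - 1 / 4 * (b ⬝ᵥ M⁻¹ *ᵥ b) := by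
  have hMt : Mᵀ = M := by simpa using hM.posSemidef.transpose_eq_self
  have hMu : IsUnit M := by simpa using hM.isUnit.neg
  set w₀ := -(1 / 2 : ℝ) • (M⁻¹ *ᵥ b)
  have hw₀ : M *ᵥ w₀ = -(1 / 2 : ℝ) • b := by
    rw [mulVec_smul, mulVec_mulVec, mul_nonsing_inv _ ((isUnit_iff_isUnit_det M).mp hMu),
      one_mulVec]
  have hval : c - w₀ ⬝ᵥ M *ᵥ w₀ = c - 1 / 4 * (b ⬝ᵥ M⁻¹ *ᵥ b) := by
    rw [hw₀]
    simp only [w₀, smul_dotProduct, dotProduct_smul, smul_eq_mul, dotProduct_comm b]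
    ring
  rw [← hval]
  refine ciSup_eq_of_forall_le_of_forall_lt_exists_gt (fun w => ?_) fun y hy => ⟨w₀, ?_⟩
  · have h := hM.posSemidef.dotProduct_mulVec_nonneg (w - w₀)
    simp only [star_trivial, neg_mulVec, dotProduct_neg] at h
    linarith [dotProduct_mulVec_add_dotProduct_eq hMt hw₀ w]
  · simp only [dotProduct_mulVec_add_dotProduct_eq hMt hw₀ w₀, sub_self, zero_dotProduct]
    linarith

lemma ciSup_quadratic_eq_schur (Muu : Matrix κ κ ℝ) (Muw : Matrix κ ι ℝ) {Mww : Matrix ι ι ℝ}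
    (hMww : (-Mww).PosDef) (a : κ → ℝ) (b : ι → ℝ) (c : ℝ) (u : κ → ℝ) :
    ⨆ w, (u ⬝ᵥ Muu *ᵥ u + 2 * (u ⬝ᵥ Muw *ᵥ w) + w ⬝ᵥ Mww *ᵥ w + a ⬝ᵥ u + b ⬝ᵥ w + c)
      = u ⬝ᵥ (Muu - Muw * Mww⁻¹ * Muwᵀ) *ᵥ u + (a - (Muw * Mww⁻¹) *ᵥ b) ⬝ᵥ u
        + (c - 1 / 4 * (b ⬝ᵥ Mww⁻¹ *ᵥ b)) := by
  have hinv : (Mww⁻¹)ᵀ = Mww⁻¹ := by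
    rw [transpose_nonsing_inv, (by simpa using hMww.posSemidef.transpose_eq_self : Mwwᵀ = Mww)]
  have hcross : ∀ w, u ⬝ᵥ Muw *ᵥ w = (Muwᵀ *ᵥ u) ⬝ᵥ w := fun w => by
    rw [mulVec_dotProduct, transpose_transpose]
  have hw : ∀ w, u ⬝ᵥ Muu *ᵥ u + 2 * (u ⬝ᵥ Muw *ᵥ w) + w ⬝ᵥ Mww *ᵥ w + a ⬝ᵥ u + b ⬝ᵥ w + c
      = w ⬝ᵥ Mww *ᵥ w + ((2 : ℝ) • (Muwᵀ *ᵥ u) + b) ⬝ᵥ w + (u ⬝ᵥ Muu *ᵥ u + a ⬝ᵥ u + c) := by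
    intro w
    rw [hcross, add_dotProduct, smul_dotProduct, smul_eq_mul]
    ring
  rw [iSup_congr hw, ciSup_dotProduct_mulVec_add hMww, add_dotProduct_mulVec_add hinv]
  simp only [smul_dotProduct, mulVec_smul, dotProduct_smul, smul_eq_mul, transpose_transpose,
    sub_mulVec, dotProduct_sub, sub_dotProduct, mulVec_dotProduct, ← mulVec_mulVec, hinv]
  rw [dotProduct_mulVec_comm_of_transpose_eq hinv b (Muwᵀ *ᵥ u), mulVec_dotProduct,
    transpose_transpose]
  ring

lemma bellman_integrand_eq_quadratic (B : Matrix ν κ ℝ) (E : Matrix ν ι ℝ) {P : Matrix ν ν ℝ}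
    (hP : Pᵀ = P) (α lam : ℝ) (y g : ν → ℝ) (ŵ : ι → ℝ) (u : κ → ℝ) (w : ι → ℝ) :
    α * ((y + B *ᵥ u + E *ᵥ w) ⬝ᵥ (P *ᵥ (y + B *ᵥ u + E *ᵥ w)))
        + α * (g ⬝ᵥ (y + B *ᵥ u + E *ᵥ w)) - lam * ((w - ŵ) ⬝ᵥ (w - ŵ))
      = u ⬝ᵥ (α • (Bᵀ * P * B)) *ᵥ u + 2 * (u ⬝ᵥ (α • (Bᵀ * P * E)) *ᵥ w)
        + w ⬝ᵥ (α • (Eᵀ * P * E) - lam • 1) *ᵥ w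
        + (α • (Bᵀ *ᵥ ((2 : ℝ) • P *ᵥ y + g))) ⬝ᵥ u
        + (α • (Eᵀ *ᵥ ((2 : ℝ) • P *ᵥ y + g)) + (2 * lam) • ŵ) ⬝ᵥ w
        + (α * (y ⬝ᵥ P *ᵥ y + g ⬝ᵥ y) - lam * (ŵ ⬝ᵥ ŵ)) := by
  rw [add_dotProduct_mulVec_add hP, add_dotProduct_mulVec_add hP]
  simp only [add_dotProduct, dotProduct_add, smul_mulVec, sub_mulVec, one_mulVec,
    mulVec_add, mulVec_smul, smul_dotProduct, dotProduct_smul, smul_eq_mul, dotProduct_sub,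
    sub_dotProduct, ← mulVec_mulVec, mulVec_dotProduct, transpose_transpose, hP]
  rw [dotProduct_comm w ŵ]
  ring

lemma PosDef.sub_mul_inv_mul_transpose {Huu : Matrix κ κ ℝ} (hHuu : Huu.PosDef)
    (Huw : Matrix κ ι ℝ) {Hww : Matrix ι ι ℝ} (hHww : (-Hww).PosDef) :
    (Huu - Huw * Hww⁻¹ * Huwᵀ).PosDef := by
  have hdet : IsUnit Hww.det := (isUnit_iff_isUnit_det Hww).mp (by simpa using hHww.isUnit.neg)
  have hinv : (-Hww)⁻¹ = -Hww⁻¹ :=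
    inv_eq_left_inv (by rw [neg_mul_neg, nonsing_inv_mul _ hdet])
  have h := hHww.inv.posSemidef.mul_mul_conjTranspose_same Huw
  rw [hinv, conjTranspose_eq_transpose_of_trivial, Matrix.mul_neg, Matrix.neg_mul] at h
  simpa only [sub_eq_add_neg] using hHuu.add_posSemidef h

lemma exists_one_div_mul_sum_ciSup_eq_quadratic {N : ℕ} (hN : 0 < N) (B : Matrix ν κ ℝ)
    (E : Matrix ν ι ℝ) {P : Matrix ν ν ℝ} (hP : Pᵀ = P) (α lam : ℝ) {Huw : Matrix κ ι ℝ}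
    {Hww : Matrix ι ι ℝ} (hHuw : Huw = α • (Bᵀ * P * E)) (hHww : Hww = α • (Eᵀ * P * E) - lam • 1)
    (hHww' : (-Hww).PosDef) (y g : ν → ℝ) (ŵ : Fin N → ι → ℝ) :
    ∃ C, ∀ u, 1 / (N : ℝ) * ∑ j, ⨆ w,
        (α * ((y + B *ᵥ u + E *ᵥ w) ⬝ᵥ (P *ᵥ (y + B *ᵥ u + E *ᵥ w)))
          + α * (g ⬝ᵥ (y + B *ᵥ u + E *ᵥ w)) - lam * ((w - ŵ j) ⬝ᵥ (w - ŵ j)))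
      = u ⬝ᵥ (α • (Bᵀ * P * B) - Huw * Hww⁻¹ * Huwᵀ) *ᵥ u
        + (α • (Bᵀ *ᵥ ((2 : ℝ) • P *ᵥ y + g)) - (Huw * Hww⁻¹) *ᵥ
            (α • (Eᵀ *ᵥ ((2 : ℝ) • P *ᵥ y + g)) + (2 * lam) • ((1 / (N : ℝ)) • ∑ j, ŵ j))) ⬝ᵥ u
        + C := by
  set b : Fin N → ι → ℝ := fun j => α • (Eᵀ *ᵥ ((2 : ℝ) • P *ᵥ y + g)) + (2 * lam) • ŵ j
  refine ⟨1 / (N : ℝ) * ∑ j, (α * (y ⬝ᵥ P *ᵥ y + g ⬝ᵥ y) - lam * (ŵ j ⬝ᵥ ŵ j)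
    - 1 / 4 * (b j ⬝ᵥ Hww⁻¹ *ᵥ b j)), fun u => ?_⟩
  have hmean : (1 / (N : ℝ)) • ∑ j, b j
      = α • (Eᵀ *ᵥ ((2 : ℝ) • P *ᵥ y + g)) + (2 * lam) • ((1 / (N : ℝ)) • ∑ j, ŵ j) := by
    have hN' : (N : ℝ) ≠ 0 := by positivity
    simp only [b, Finset.sum_add_distrib, Finset.sum_const, Finset.card_univ, Fintype.card_fin,
      ← Finset.smul_sum, ← Nat.cast_smul_eq_nsmul ℝ, smul_add, smul_smul]
    match_scalars <;> field_simp
  simp_rw [bellman_integrand_eq_quadratic B E hP, ← hHuw, ← hHww,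
    ciSup_quadratic_eq_schur _ _ hHww']
  rw [one_div_mul_sum_add_dotProduct hN, hmean]

end Matrix

theorem stmt3_general {n m d N : ℕ} (hN : 0 < N)
    (A : Matrix (Fin n) (Fin n) ℝ) (B : Matrix (Fin n) (Fin m) ℝ)
    (E : Matrix (Fin n) (Fin d) ℝ)
    (Q : Matrix (Fin n) (Fin n) ℝ) (R : Matrix (Fin m) (Fin m) ℝ)
    (α lam : ℝ) (hα : α ∈ Set.Ioo (0 : ℝ) 1)
    (hR : R.PosDef)
    (P : Matrix (Fin n) (Fin n) ℝ) (hP : P.PosSemidef)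
    (hpd : (lam • (1 : Matrix (Fin d) (Fin d) ℝ) - α • (Eᵀ * P * E)).PosDef)
    (g : Fin n → ℝ) (what : Fin N → Fin d → ℝ)
    (wbar : Fin d → ℝ) (hwbar : wbar = (1 / (N : ℝ)) • ∑ j, what j)
    -- the blocks
    (Hxu : Matrix (Fin n) (Fin m) ℝ)
    (Hxw : Matrix (Fin n) (Fin d) ℝ) (Huu : Matrix (Fin m) (Fin m) ℝ)
    (Huw : Matrix (Fin m) (Fin d) ℝ) (Hww : Matrix (Fin d) (Fin d) ℝ)
    (Gu : Fin m → ℝ) (Gw : Fin d → ℝ)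
    (hHxu : Hxu = α • (Aᵀ * P * B))
    (hHxw : Hxw = α • (Aᵀ * P * E)) (hHuu : Huu = R + α • (Bᵀ * P * B))
    (hHuw : Huw = α • (Bᵀ * P * E))
    (hHww : Hww = α • (Eᵀ * P * E) - lam • (1 : Matrix (Fin d) (Fin d) ℝ))
    (hGu : Gu = α • (Bᵀ *ᵥ g)) (hGw : Gw = α • (Eᵀ *ᵥ g) + (2 * lam) • wbar)
    -- the state, the objective and the claimed minimizer
    (x : Fin n → ℝ) (F : (Fin m → ℝ) → ℝ)
    (hF : F = fun u => x ⬝ᵥ (Q *ᵥ x) + u ⬝ᵥ (R *ᵥ u) +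
      (1 / (N : ℝ)) * ∑ j, ⨆ w : Fin d → ℝ,
        (α * ((A *ᵥ x + B *ᵥ u + E *ᵥ w) ⬝ᵥ (P *ᵥ (A *ᵥ x + B *ᵥ u + E *ᵥ w)))
          + α * (g ⬝ᵥ (A *ᵥ x + B *ᵥ u + E *ᵥ w))
          - lam * ((w - what j) ⬝ᵥ (w - what j))))
    (K : Matrix (Fin m) (Fin n) ℝ) (r : Fin m → ℝ)
    (hK : K = (Huu - Huw * Hww⁻¹ * Huwᵀ)⁻¹ * (Huw * Hww⁻¹ * Hxwᵀ - Hxuᵀ))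
    (hr : r = (-(1 : ℝ) / 2) • ((Huu - Huw * Hww⁻¹ * Huwᵀ)⁻¹ *ᵥ
      (Gu - (Huw * Hww⁻¹) *ᵥ Gw)))
    (ustar : Fin m → ℝ) (hustar : ustar = K *ᵥ x + r) :
    StrictConvexOn ℝ Set.univ F ∧ IsMinOn F Set.univ ustar ∧
      ∀ u, u ≠ ustar → F ustar < F u := by
  have hPt := hP.transpose_eq_self
  have hHww' : (-Hww).PosDef := by rwa [hHww, neg_sub]
  obtain ⟨C, hC⟩ :=
    exists_one_div_mul_sum_ciSup_eq_quadratic hN B E hPt α lam hHuw hHww hHww' (A *ᵥ x) g what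
  set L := Huw * Hww⁻¹
  set S := Huu - L * Huwᵀ
  set t := (2 : ℝ) • ((Hxuᵀ - L * Hxwᵀ) *ᵥ x) + (Gu - L *ᵥ Gw)
  have hS : S.PosDef := by
    refine PosDef.sub_mul_inv_mul_transpose ?_ Huw hHww'
    rw [hHuu]
    exact hR.add_posSemidef (by simpa using (hP.conjTranspose_mul_mul_same B).smul hα.1.le)
  have ht : α • (Bᵀ *ᵥ ((2 : ℝ) • P *ᵥ (A *ᵥ x) + g))
      - L *ᵥ (α • (Eᵀ *ᵥ ((2 : ℝ) • P *ᵥ (A *ᵥ x) + g)) + (2 * lam) • wbar) = t := by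
    simp only [t, hHxu, hHxw, hGu, hGw, transpose_smul, transpose_mul, transpose_transpose, hPt,
      sub_mulVec, smul_mulVec, mulVec_add, mulVec_smul, ← mulVec_mulVec]
    module
  have hF' : ∀ u, F u = u ⬝ᵥ S *ᵥ u + t ⬝ᵥ u + (x ⬝ᵥ Q *ᵥ x + C) := by
    intro u
    have hS' : S = R + (α • (Bᵀ * P * B) - L * Huwᵀ) := by
      simp only [S, hHuu, add_sub_assoc]
    simp only [hF]
    rw [hC, ← hwbar, ht, hS', add_mulVec, dotProduct_add]
    ring
  have hcrit : S *ᵥ ustar = -(1 / 2 : ℝ) • t := by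
    have hSinv : S * S⁻¹ = 1 := mul_nonsing_inv _ ((isUnit_iff_isUnit_det S).mp hS.isUnit)
    rw [hustar, hK, hr, mulVec_add, mulVec_mulVec, ← Matrix.mul_assoc, hSinv, Matrix.one_mul,
      mulVec_smul, mulVec_mulVec, hSinv, one_mulVec]
    simp only [t, sub_mulVec]
    module
  exact strictConvexOn_isMinOn_quadratic hS hcrit hF'

/-- the one-step Bellman minimization
`F(u) = xᵀQx + uᵀRu + (1/N)Σⱼ sup_w [α(Ax+Bu+Ew)ᵀP(Ax+Bu+Ew) + αgᵀ(Ax+Bu+Ew) − λ‖w−ŵ⁽ʲ⁾‖²]`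
is strictly convex with unique minimizer `u* = Kx + r`. -/
theorem stmt3 {n m d N : ℕ} (hN : 0 < N)
    (A : Matrix (Fin n) (Fin n) ℝ) (B : Matrix (Fin n) (Fin m) ℝ)
    (E : Matrix (Fin n) (Fin d) ℝ)
    (Q : Matrix (Fin n) (Fin n) ℝ) (R : Matrix (Fin m) (Fin m) ℝ)
    (α lam : ℝ) (hα : α ∈ Set.Ioo (0 : ℝ) 1) (hlam : 0 < lam)
    (hQ : Q.PosSemidef) (hR : R.PosDef)
    (P : Matrix (Fin n) (Fin n) ℝ) (hP : P.PosSemidef)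
    (hpd : (lam • (1 : Matrix (Fin d) (Fin d) ℝ) - α • (Eᵀ * P * E)).PosDef)
    (g : Fin n → ℝ) (what : Fin N → Fin d → ℝ)
    (wbar : Fin d → ℝ) (hwbar : wbar = (1 / (N : ℝ)) • ∑ j, what j)
    -- the blocks
    (Hxx : Matrix (Fin n) (Fin n) ℝ) (Hxu : Matrix (Fin n) (Fin m) ℝ)
    (Hxw : Matrix (Fin n) (Fin d) ℝ) (Huu : Matrix (Fin m) (Fin m) ℝ)
    (Huw : Matrix (Fin m) (Fin d) ℝ) (Hww : Matrix (Fin d) (Fin d) ℝ)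
    (Gu : Fin m → ℝ) (Gw : Fin d → ℝ)
    (hHxx : Hxx = Q + α • (Aᵀ * P * A)) (hHxu : Hxu = α • (Aᵀ * P * B))
    (hHxw : Hxw = α • (Aᵀ * P * E)) (hHuu : Huu = R + α • (Bᵀ * P * B))
    (hHuw : Huw = α • (Bᵀ * P * E))
    (hHww : Hww = α • (Eᵀ * P * E) - lam • (1 : Matrix (Fin d) (Fin d) ℝ))
    (hGu : Gu = α • (Bᵀ *ᵥ g)) (hGw : Gw = α • (Eᵀ *ᵥ g) + (2 * lam) • wbar)
    -- the state, the objective and the claimed minimizer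
    (x : Fin n → ℝ) (F : (Fin m → ℝ) → ℝ)
    (hF : F = fun u => x ⬝ᵥ (Q *ᵥ x) + u ⬝ᵥ (R *ᵥ u) +
      (1 / (N : ℝ)) * ∑ j, ⨆ w : Fin d → ℝ,
        (α * ((A *ᵥ x + B *ᵥ u + E *ᵥ w) ⬝ᵥ (P *ᵥ (A *ᵥ x + B *ᵥ u + E *ᵥ w)))
          + α * (g ⬝ᵥ (A *ᵥ x + B *ᵥ u + E *ᵥ w))
          - lam * ((w - what j) ⬝ᵥ (w - what j))))
    (K : Matrix (Fin m) (Fin n) ℝ) (r : Fin m → ℝ)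
    (hK : K = (Huu - Huw * Hww⁻¹ * Huwᵀ)⁻¹ * (Huw * Hww⁻¹ * Hxwᵀ - Hxuᵀ))
    (hr : r = (-(1 : ℝ) / 2) • ((Huu - Huw * Hww⁻¹ * Huwᵀ)⁻¹ *ᵥ
      (Gu - (Huw * Hww⁻¹) *ᵥ Gw)))
    (ustar : Fin m → ℝ) (hustar : ustar = K *ᵥ x + r) :
    StrictConvexOn ℝ Set.univ F ∧ IsMinOn F Set.univ ustar ∧
      ∀ u, u ≠ ustar → F ustar < F u :=
  stmt3_general hN A B E Q R α lam hα hR P hP hpd g what wbar hwbar Hxu Hxw Huu Huw Hww Gu Gw hHxu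
    hHxw hHuu hHuw hHww hGu hGw x F hF K r hK hr ustar hustar
end

section
/- Let A be n×n, B n×m, E n×d, Q symmetric positive semidefinite, R symmetric positive definite, α ∈ (0,1), λ > 0. Define the Riccati-type map R(P) = H_xx − [H_xu H_xw] [[H_uu, H_uw],[H_uwᵀ, H_ww]]⁻¹ [H_xuᵀ; H_xwᵀ], where H_xx = Q + αAᵀPA, H_xu = αAᵀPB, H_xw = αAᵀPE, H_uu = R + αBᵀPB, H_uw = αBᵀPE, H_ww = αEᵀPE − λI. Let P_0 = 0 and P_{i+1} = R(P_i), and suppose λI − αEᵀP_iE is positive definite for every i. Then the sequence (P_i) is monotone nondecreasing in the Loewner order: 0 = P_0 ⪯ P_1 ⪯ P_2 ⪯ ⋯, and every P_i is symmetric positive semidefinite. -/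
/-!
For fixed `P`, the one-stage closed-loop cost under linear feedback `u = K x`, `w = L x` is
`V_P(K, L) = H_xx + Φ(K; L)`, where `Φ(G) = C G + Gᵀ Cᵀ + Gᵀ M G` has Hessian the saddle matrix
`M = [[U, X], [Xᵀ, -W]]` with `U = H_uu ≻ 0` and `W = -H_ww ≻ 0`. The Schur complement makes `M`
invertible, and completing the square, `Φ(G) = (G - G₀)ᵀ M (G - G₀) - C M⁻¹ Cᵀ` with
`G₀ = -M⁻¹ Cᵀ`, shows that `G₀` is a saddle point of `V_P` for the Loewner order whose value is
`R(P)`. Saddle values are monotone in the payoff and `V_P` is monotone in `P`, so `P ⪯ P'`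
gives `R(P) ⪯ R(P')`; moreover `R(P) ⪰ V_P(K₀, 0) ⪰ 0`. Induction from `P₀ = 0 ⪯ P₁` finishes.
-/

open Matrix Set
open scoped MatrixOrder

lemma IsSaddlePointOn.value_mono {E F β : Type*} [Preorder β] {f g : E → F → β}
    {a a' : E} {b b' : F} (hf : IsSaddlePointOn univ univ f a b)
    (hg : IsSaddlePointOn univ univ g a' b') (hfg : ∀ x y, f x y ≤ g x y) :
    f a b ≤ g a' b' :=
  calc f a b ≤ f a' b := hf a' trivial b trivial
    _ ≤ g a' b := hfg a' b
    _ ≤ g a' b' := hg a' trivial b trivial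

namespace Matrix

variable {ι κ μ δ : Type*}

lemma PosSemidef.transpose_eq [Fintype κ] {M : Matrix κ κ ℝ} (hM : M.PosSemidef) : Mᵀ = M := by
  simpa [conjTranspose_eq_transpose_of_trivial] using hM.1.eq

lemma PosSemidef.transpose_mul_mul_same [Fintype ι] [Fintype κ] {M : Matrix κ κ ℝ}
    (hM : M.PosSemidef) (C : Matrix κ ι ℝ) : (Cᵀ * M * C).PosSemidef := by
  simpa [conjTranspose_eq_transpose_of_trivial] using hM.conjTranspose_mul_mul_same C

lemma isUnit_det_fromBlocks_neg [Fintype μ] [Fintype δ] [DecidableEq μ] [DecidableEq δ]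
    {U : Matrix μ μ ℝ} {W : Matrix δ δ ℝ} (hU : U.PosDef) (hW : W.PosDef) (X : Matrix μ δ ℝ) :
    IsUnit (fromBlocks U X Xᵀ (-W)).det := by
  let : Invertible U := hU.isUnit.invertible
  have hSchur : (W + Xᵀ * ⅟U * X).PosDef := by
    rw [invOf_eq_nonsing_inv]
    exact hW.add_posSemidef (hU.inv.posSemidef.transpose_mul_mul_same X)
  rw [det_fromBlocks₁₁, ← neg_add', det_neg]
  exact hU.det_pos.ne'.isUnit.mul ((isUnit_one.neg.pow _).mul hSchur.det_pos.ne'.isUnit)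

lemma fromRows_transpose_mul_fromBlocks_mul_fromRows [Fintype μ] [Fintype δ]
    (U : Matrix μ μ ℝ) (X : Matrix μ δ ℝ) (W : Matrix δ δ ℝ) (a : Matrix μ ι ℝ)
    (b : Matrix δ ι ℝ) :
    (fromRows a b)ᵀ * fromBlocks U X Xᵀ (-W) * fromRows a b =
      aᵀ * U * a + aᵀ * X * b + bᵀ * Xᵀ * a - bᵀ * W * b := by
  simp only [transpose_fromRows, fromCols_mul_fromBlocks, fromCols_mul_fromRows,
    Matrix.add_mul, Matrix.mul_neg, Matrix.neg_mul, Matrix.mul_assoc]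
  abel

def quadraticFn [Fintype κ] (M : Matrix κ κ ℝ) (C : Matrix ι κ ℝ) (G : Matrix κ ι ℝ) :
    Matrix ι ι ℝ :=
  C * G + Gᵀ * Cᵀ + Gᵀ * M * G

lemma quadraticFn_eq [Fintype κ] [DecidableEq κ] {M : Matrix κ κ ℝ} (hM : Mᵀ = M)
    (hdet : IsUnit M.det) (C : Matrix ι κ ℝ) (G : Matrix κ ι ℝ) :
    quadraticFn M C G = (G + M⁻¹ * Cᵀ)ᵀ * M * (G + M⁻¹ * Cᵀ) - C * M⁻¹ * Cᵀ := by
  have hinv : (M⁻¹)ᵀ = M⁻¹ := by rw [transpose_nonsing_inv, hM]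
  simp only [quadraticFn, transpose_add, transpose_mul, transpose_transpose, hinv,
    Matrix.add_mul, Matrix.mul_add, Matrix.mul_assoc, mul_nonsing_inv_cancel_left _ _ hdet]
  simp only [← Matrix.mul_assoc, nonsing_inv_mul_cancel_right _ _ hdet]
  abel

theorem exists_isSaddlePointOn_quadraticFn_fromBlocks [Fintype ι] [Fintype μ] [Fintype δ]
    [DecidableEq μ] [DecidableEq δ] {U : Matrix μ μ ℝ} {W : Matrix δ δ ℝ}
    (hU : U.PosDef) (hW : W.PosDef) (X : Matrix μ δ ℝ) (C : Matrix ι (μ ⊕ δ) ℝ) :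
    ∃ K₀ L₀, IsSaddlePointOn univ univ
        (fun K L => quadraticFn (fromBlocks U X Xᵀ (-W)) C (fromRows K L)) K₀ L₀ ∧
      quadraticFn (fromBlocks U X Xᵀ (-W)) C (fromRows K₀ L₀) =
        -(C * (fromBlocks U X Xᵀ (-W))⁻¹ * Cᵀ) := by
  set M := fromBlocks U X Xᵀ (-W)
  have hM : Mᵀ = M := by
    rw [fromBlocks_transpose, transpose_transpose, transpose_neg, hU.posSemidef.transpose_eq,
      hW.posSemidef.transpose_eq]
  set G₀ := -(M⁻¹ * Cᵀ)
  have hexpand : ∀ K L, quadraticFn M C (fromRows K L) =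
      (fromRows (K - toRows₁ G₀) (L - toRows₂ G₀))ᵀ * M *
        fromRows (K - toRows₁ G₀) (L - toRows₂ G₀) - C * M⁻¹ * Cᵀ := by
    intro K L
    have hshift : fromRows K L + M⁻¹ * Cᵀ = fromRows (K - toRows₁ G₀) (L - toRows₂ G₀) := by
      ext (i | i) j <;> simp [G₀]
    rw [quadraticFn_eq hM (isUnit_det_fromBlocks_neg hU hW X), hshift]
  refine ⟨toRows₁ G₀, toRows₂ G₀, fun K _ L _ => ?_, ?_⟩
  · dsimp only
    rw [le_iff, hexpand, hexpand, sub_self, sub_self,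
      fromRows_transpose_mul_fromBlocks_mul_fromRows,
      fromRows_transpose_mul_fromBlocks_mul_fromRows]
    simpa using (hU.posSemidef.transpose_mul_mul_same (K - toRows₁ G₀)).add
      (hW.posSemidef.transpose_mul_mul_same (L - toRows₂ G₀))
  · rw [hexpand]
    simp

end Matrix

section Game

variable {ι μ δ : Type*} [Fintype ι] [Fintype μ] [Fintype δ]
variable (A : Matrix ι ι ℝ) (B : Matrix ι μ ℝ) (E : Matrix ι δ ℝ) (Q : Matrix ι ι ℝ)
  (R : Matrix μ μ ℝ) (α lam : ℝ)

/-- `xᵀ (closedLoopCost P K L) x` is the stage cost `xᵀQx + uᵀRu - λ‖w‖²` plus the discounted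
terminal cost `α x₊ᵀ P x₊` of the successor `x₊ = A x + B u + E w`, under `u = K x`, `w = L x`. -/
def closedLoopCost (P : Matrix ι ι ℝ) (K : Matrix μ ι ℝ) (L : Matrix δ ι ℝ) :
    Matrix ι ι ℝ :=
  Q + Kᵀ * R * K - lam • (Lᵀ * L) + α • ((A + B * K + E * L)ᵀ * P * (A + B * K + E * L))

variable {A B E Q R α lam} in
theorem closedLoopCost_mono (hα : 0 ≤ α) {P P' : Matrix ι ι ℝ} (hP : P ≤ P')
    (K : Matrix μ ι ℝ) (L : Matrix δ ι ℝ) :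
    closedLoopCost A B E Q R α lam P K L ≤ closedLoopCost A B E Q R α lam P' K L := by
  have hdiff : closedLoopCost A B E Q R α lam P' K L - closedLoopCost A B E Q R α lam P K L =
      α • ((A + B * K + E * L)ᵀ * (P' - P) * (A + B * K + E * L)) := by
    simp only [closedLoopCost, Matrix.sub_mul, Matrix.mul_sub, smul_sub]
    abel
  rw [le_iff, hdiff]
  exact ((le_iff.mp hP).transpose_mul_mul_same _).smul hα

variable [DecidableEq δ]

theorem closedLoopCost_eq_add_quadraticFn {P : Matrix ι ι ℝ} (hP : Pᵀ = P)
    (K : Matrix μ ι ℝ) (L : Matrix δ ι ℝ) :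
    closedLoopCost A B E Q R α lam P K L = Q + α • (Aᵀ * P * A) +
      quadraticFn
        (fromBlocks (R + α • (Bᵀ * P * B)) (α • (Bᵀ * P * E)) (α • (Bᵀ * P * E))ᵀ
          (-(lam • 1 - α • (Eᵀ * P * E))))
        (fromCols (α • (Aᵀ * P * B)) (α • (Aᵀ * P * E))) (fromRows K L) := by
  rw [closedLoopCost, quadraticFn]
  simp only [transpose_fromRows, transpose_fromCols, fromCols_mul_fromRows,
    fromCols_mul_fromBlocks, transpose_add, Matrix.transpose_mul, transpose_smul,
    transpose_transpose, hP, Matrix.add_mul, Matrix.mul_add, Matrix.smul_mul,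
    Matrix.mul_smul, smul_add, Matrix.neg_mul, Matrix.mul_neg, Matrix.mul_one,
    sub_eq_add_neg, neg_add, neg_neg, Matrix.mul_assoc]
  abel

variable [DecidableEq μ]

noncomputable def riccati (P : Matrix ι ι ℝ) : Matrix ι ι ℝ :=
  (Q + α • (Aᵀ * P * A)) -
    fromCols (α • (Aᵀ * P * B)) (α • (Aᵀ * P * E)) *
      (fromBlocks (R + α • (Bᵀ * P * B)) (α • (Bᵀ * P * E))
        (α • (Bᵀ * P * E))ᵀ
        (α • (Eᵀ * P * E) - lam • (1 : Matrix δ δ ℝ)))⁻¹ *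
      (fromCols (α • (Aᵀ * P * B)) (α • (Aᵀ * P * E)))ᵀ

variable {A B E Q R α lam}

theorem exists_isSaddlePointOn_closedLoopCost (hα : 0 ≤ α) (hR : R.PosDef)
    {P : Matrix ι ι ℝ} (hP : P.PosSemidef) (hW : (lam • 1 - α • (Eᵀ * P * E)).PosDef) :
    ∃ K₀ L₀, IsSaddlePointOn univ univ (closedLoopCost A B E Q R α lam P) K₀ L₀ ∧
      closedLoopCost A B E Q R α lam P K₀ L₀ = riccati A B E Q R α lam P := by
  have hU : (R + α • (Bᵀ * P * B)).PosDef :=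
    hR.add_posSemidef ((hP.transpose_mul_mul_same B).smul hα)
  obtain ⟨K₀, L₀, hsaddle, hvalue⟩ :=
    exists_isSaddlePointOn_quadraticFn_fromBlocks hU hW (α • (Bᵀ * P * E))
      (fromCols (α • (Aᵀ * P * B)) (α • (Aᵀ * P * E)))
  have hV := closedLoopCost_eq_add_quadraticFn A B E Q R α lam hP.transpose_eq
  refine ⟨K₀, L₀, fun K _ L _ => ?_, ?_⟩
  · rw [hV, hV]
    exact add_le_add_right (hsaddle K trivial L trivial) _
  · rw [hV, hvalue, neg_sub, ← sub_eq_add_neg]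
    rfl

theorem riccati_posSemidef (hα : 0 ≤ α) (hQ : Q.PosSemidef) (hR : R.PosDef)
    {P : Matrix ι ι ℝ} (hP : P.PosSemidef) (hW : (lam • 1 - α • (Eᵀ * P * E)).PosDef) :
    (riccati A B E Q R α lam P).PosSemidef := by
  obtain ⟨K₀, L₀, hsaddle, hvalue⟩ := exists_isSaddlePointOn_closedLoopCost hα hR hP hW
  have hzero : 0 ≤ closedLoopCost A B E Q R α lam P K₀ 0 := by
    simpa [closedLoopCost] using ((hQ.add (hR.posSemidef.transpose_mul_mul_same K₀)).add
      ((hP.transpose_mul_mul_same (A + B * K₀)).smul hα)).nonneg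
  rw [← hvalue, ← nonneg_iff_posSemidef]
  exact hzero.trans (hsaddle K₀ trivial 0 trivial)

theorem riccati_mono (hα : 0 ≤ α) (hR : R.PosDef) {P P' : Matrix ι ι ℝ}
    (hP : P.PosSemidef) (hP' : P'.PosSemidef) (hPP' : P ≤ P')
    (hW : (lam • 1 - α • (Eᵀ * P * E)).PosDef) (hW' : (lam • 1 - α • (Eᵀ * P' * E)).PosDef) :
    riccati A B E Q R α lam P ≤ riccati A B E Q R α lam P' := by
  obtain ⟨K₀, L₀, hsaddle, hvalue⟩ := exists_isSaddlePointOn_closedLoopCost hα hR hP hW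
  obtain ⟨K₀', L₀', hsaddle', hvalue'⟩ := exists_isSaddlePointOn_closedLoopCost hα hR hP' hW'
  rw [← hvalue, ← hvalue']
  exact hsaddle.value_mono hsaddle' (closedLoopCost_mono hα hPP')

end Game

theorem stmt7_general {n m d : ℕ}
    (A : Matrix (Fin n) (Fin n) ℝ) (B : Matrix (Fin n) (Fin m) ℝ)
    (E : Matrix (Fin n) (Fin d) ℝ)
    (Q : Matrix (Fin n) (Fin n) ℝ) (R : Matrix (Fin m) (Fin m) ℝ)
    (α lam : ℝ) (hα : α ∈ Set.Ioo (0 : ℝ) 1)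
    (hQ : Q.PosSemidef) (hR : R.PosDef)
    (Ricc : Matrix (Fin n) (Fin n) ℝ → Matrix (Fin n) (Fin n) ℝ)
    (hRicc : ∀ P : Matrix (Fin n) (Fin n) ℝ,
      Ricc P = (Q + α • (Aᵀ * P * A)) -
        fromCols (α • (Aᵀ * P * B)) (α • (Aᵀ * P * E)) *
          (fromBlocks (R + α • (Bᵀ * P * B)) (α • (Bᵀ * P * E))
            (α • (Bᵀ * P * E))ᵀ
            (α • (Eᵀ * P * E) - lam • (1 : Matrix (Fin d) (Fin d) ℝ)))⁻¹ *
          (fromCols (α • (Aᵀ * P * B)) (α • (Aᵀ * P * E)))ᵀ)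
    (Pseq : ℕ → Matrix (Fin n) (Fin n) ℝ)
    (hP0 : Pseq 0 = 0) (hPs : ∀ i, Pseq (i + 1) = Ricc (Pseq i))
    (hpd : ∀ i,
      (lam • (1 : Matrix (Fin d) (Fin d) ℝ) - α • (Eᵀ * Pseq i * E)).PosDef) :
    (∀ i, (Pseq i).PosSemidef) ∧ ∀ i, (Pseq (i + 1) - Pseq i).PosSemidef := by
  obtain rfl : Ricc = riccati A B E Q R α lam := funext hRicc
  have hPs_psd : ∀ i, (Pseq i).PosSemidef → (Pseq (i + 1)).PosSemidef := fun i hPi => by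
    rw [hPs]
    exact riccati_posSemidef hα.1.le hQ hR hPi (hpd i)
  have hchain : ∀ i, (Pseq i).PosSemidef ∧ Pseq i ≤ Pseq (i + 1) := by
    intro i
    induction i with
    | zero =>
      have hP1 := hPs_psd 0 (hP0 ▸ PosSemidef.zero)
      exact ⟨hP0 ▸ PosSemidef.zero, hP0 ▸ hP1.nonneg⟩
    | succ i ih =>
      have hPi1 := hPs_psd i ih.1
      refine ⟨hPi1, ?_⟩
      have hmono : riccati A B E Q R α lam (Pseq i) ≤ riccati A B E Q R α lam (Pseq (i + 1)) :=
        riccati_mono hα.1.le hR ih.1 hPi1 ih.2 (hpd i) (hpd (i + 1))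
      rwa [← hPs, ← hPs] at hmono
  exact ⟨fun i => (hchain i).1, fun i => (hchain i).2⟩

/-- the Riccati-type value-iteration sequence starting from `P₀ = 0` is
monotone nondecreasing in the Loewner order, and every iterate is symmetric positive
semidefinite. (`M ⪯ N` is expressed as `(N - M).PosSemidef`.) -/
theorem stmt7 {n m d : ℕ}
    (A : Matrix (Fin n) (Fin n) ℝ) (B : Matrix (Fin n) (Fin m) ℝ)
    (E : Matrix (Fin n) (Fin d) ℝ)
    (Q : Matrix (Fin n) (Fin n) ℝ) (R : Matrix (Fin m) (Fin m) ℝ)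
    (α lam : ℝ) (hα : α ∈ Set.Ioo (0 : ℝ) 1) (hlam : 0 < lam)
    (hQ : Q.PosSemidef) (hR : R.PosDef)
    (Ricc : Matrix (Fin n) (Fin n) ℝ → Matrix (Fin n) (Fin n) ℝ)
    (hRicc : ∀ P : Matrix (Fin n) (Fin n) ℝ,
      Ricc P = (Q + α • (Aᵀ * P * A)) -
        fromCols (α • (Aᵀ * P * B)) (α • (Aᵀ * P * E)) *
          (fromBlocks (R + α • (Bᵀ * P * B)) (α • (Bᵀ * P * E))
            (α • (Bᵀ * P * E))ᵀ
            (α • (Eᵀ * P * E) - lam • (1 : Matrix (Fin d) (Fin d) ℝ)))⁻¹ *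
          (fromCols (α • (Aᵀ * P * B)) (α • (Aᵀ * P * E)))ᵀ)
    (Pseq : ℕ → Matrix (Fin n) (Fin n) ℝ)
    (hP0 : Pseq 0 = 0) (hPs : ∀ i, Pseq (i + 1) = Ricc (Pseq i))
    (hpd : ∀ i,
      (lam • (1 : Matrix (Fin d) (Fin d) ℝ) - α • (Eᵀ * Pseq i * E)).PosDef) :
    (∀ i, (Pseq i).PosSemidef) ∧ ∀ i, (Pseq (i + 1) - Pseq i).PosSemidef :=
  stmt7_general A B E Q R α lam hα hQ hR Ricc hRicc Pseq hP0 hPs hpd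
end

section
/- Let A be n×n, B n×m, E n×d, Q symmetric positive semidefinite, R symmetric positive definite, α ∈ (0,1), λ > 0, P a symmetric positive semidefinite n×n matrix with λI − αEᵀPE positive definite, g ∈ ℝⁿ, z ∈ ℝ, and w̄ ∈ ℝ^d. Define f(u,w) = xᵀQx + uᵀRu − λ‖w−w̄‖² + α[(Ax+Bu+Ew)ᵀP(Ax+Bu+Ew) + gᵀ(Ax+Bu+Ew) + z] for a fixed x ∈ ℝⁿ. With the blocks H_xx = Q + αAᵀPA, H_xu = αAᵀPB, H_xw = αAᵀPE, H_uu = R + αBᵀPB, H_uw = αBᵀPE, H_ww = αEᵀPE − λI, G_u = αBᵀg, G_w = αEᵀg + 2λw̄, set u* = Kx + r and w* = Lx + l, where K = (H_uu − H_uw H_ww⁻¹ H_uwᵀ)⁻¹(H_uw H_ww⁻¹ H_xwᵀ − H_xuᵀ), r = −½(H_uu − H_uw H_ww⁻¹ H_uwᵀ)⁻¹(G_u − H_uw H_ww⁻¹ G_w), L = (H_ww − H_uwᵀ H_uu⁻¹ H_uw)⁻¹(H_uwᵀ H_uu⁻¹ H_xuᵀ − H_xwᵀ), l = −½(H_ww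 − H_uwᵀ H_uu⁻¹ H_uw)⁻¹(G_w − H_uwᵀ H_uu⁻¹ G_u). Then (u*, w*) is a saddle point of f: f(u*, w) ≤ f(u*, w*) ≤ f(u, w*) for all u ∈ ℝ^m and w ∈ ℝ^d. -/
/-!
Expanding the quadratic continuation value shows that, for fixed `x`, the payoff is a constant plus
the block quadratic form `uᵀH_uu u + 2uᵀH_uw w + wᵀH_ww w + 2uᵀp + 2wᵀq`, with
`p = H_xuᵀx + G_u/2` and `q = H_xwᵀx + G_w/2`. The formulas for `u* = Kx + r` and `w* = Lx + l`
are the Schur-complement solution of its stationarity system, which is uniquely solvable because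
`H_uu` is positive and `H_ww` negative definite. For a quadratic in one variable with a symmetric
matrix, the gap to a stationary point is the quadratic form of the displacement, so convexity in `u`
and concavity in `w` make the stationary point a saddle point.
-/

open Matrix

namespace Matrix

variable {R : Type*} [CommRing R] {m : Type*} [Fintype m]

theorem isUnit_det_neg_iff [DecidableEq m] (A : Matrix m m R) :
    IsUnit (-A).det ↔ IsUnit A.det := by
  rw [← isUnit_iff_isUnit_det, IsUnit.neg_iff, isUnit_iff_isUnit_det]

theorem neg_nonsing_inv [DecidableEq m] (A : Matrix m m R) : (-A)⁻¹ = -A⁻¹ := by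
  by_cases h : IsUnit A.det
  · exact inv_eq_right_inv (by rw [neg_mul_neg, mul_nonsing_inv _ h])
  · rw [nonsing_inv_apply_not_isUnit _ h,
      nonsing_inv_apply_not_isUnit _ ((isUnit_det_neg_iff A).not.mpr h), neg_zero]

theorem IsSymm.dotProduct_mulVec_comm_s13 {M : Matrix m m R} (hM : M.IsSymm) (v w : m → R) :
    v ⬝ᵥ M *ᵥ w = w ⬝ᵥ M *ᵥ v := by
  conv_lhs => rw [← hM.eq]
  exact dotProduct_transpose_mulVec M v w

theorem IsSymm.quadratic_sub_of_mulVec_add_eq_zero {M : Matrix m m R} (hM : M.IsSymm)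
    {b v₀ : m → R} (h : M *ᵥ v₀ + b = 0) (v : m → R) :
    (v ⬝ᵥ M *ᵥ v + 2 * (v ⬝ᵥ b)) - (v₀ ⬝ᵥ M *ᵥ v₀ + 2 * (v₀ ⬝ᵥ b))
      = (v - v₀) ⬝ᵥ M *ᵥ (v - v₀) := by
  rw [eq_neg_of_add_eq_zero_right h, mulVec_sub, dotProduct_sub, sub_dotProduct,
    sub_dotProduct, hM.dotProduct_mulVec_comm_s13 v₀ v]
  simp only [dotProduct_neg]
  ring

end Matrix

section BlockSystem

variable {R : Type*} [CommRing R] {m d : Type*} [Fintype m] [Fintype d]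

def IsBlockSolution (Huu : Matrix m m R) (Huw : Matrix m d R) (C : Matrix d m R)
    (Hww : Matrix d d R) (p : m → R) (q : d → R) (u : m → R) (w : d → R) : Prop :=
  Huu *ᵥ u + Huw *ᵥ w + p = 0 ∧ C *ᵥ u + Hww *ᵥ w + q = 0

variable {Huu : Matrix m m R} {Huw : Matrix m d R} {C : Matrix d m R} {Hww : Matrix d d R}
  {p : m → R} {q : d → R}

theorem IsBlockSolution.swap {u : m → R} {w : d → R}
    (h : IsBlockSolution Huu Huw C Hww p q u w) : IsBlockSolution Hww C Huw Huu q p w u := by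
  obtain ⟨h₁, h₂⟩ := h
  exact ⟨by rwa [add_comm (Hww *ᵥ w)], by rwa [add_comm (Huw *ᵥ w)]⟩

variable [DecidableEq d]

theorem isBlockSolution_of_schur_left (hW : IsUnit Hww.det) {u : m → R}
    (hu : (Huu - Huw * Hww⁻¹ * C) *ᵥ u = (Huw * Hww⁻¹) *ᵥ q - p) :
    IsBlockSolution Huu Huw C Hww p q u (-(Hww⁻¹ *ᵥ (q + C *ᵥ u))) := by
  constructor
  · simp only [sub_mulVec, mulVec_neg, mulVec_add, mulVec_mulVec, Matrix.mul_assoc] at hu ⊢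
    linear_combination hu
  · rw [mulVec_neg, mulVec_mulVec, mul_nonsing_inv _ hW, one_mulVec]
    abel

variable [DecidableEq m]

theorem IsBlockSolution.eq_of_schur_right (hU : IsUnit Huu.det)
    (hS : IsUnit (Hww - C * Huu⁻¹ * Huw).det) {u₁ u₂ : m → R} {w₁ w₂ : d → R}
    (h₁ : IsBlockSolution Huu Huw C Hww p q u₁ w₁)
    (h₂ : IsBlockSolution Huu Huw C Hww p q u₂ w₂) : w₁ = w₂ := by
  have hu : Huu *ᵥ (u₁ - u₂) + Huw *ᵥ (w₁ - w₂) = 0 := by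
    rw [mulVec_sub, mulVec_sub]; linear_combination h₁.1 - h₂.1
  have hw : C *ᵥ (u₁ - u₂) + Hww *ᵥ (w₁ - w₂) = 0 := by
    rw [mulVec_sub, mulVec_sub]; linear_combination h₁.2 - h₂.2
  have hu' : u₁ - u₂ = -(Huu⁻¹ *ᵥ (Huw *ᵥ (w₁ - w₂))) := calc
    u₁ - u₂ = Huu⁻¹ *ᵥ (Huu *ᵥ (u₁ - u₂)) := by
      rw [mulVec_mulVec, nonsing_inv_mul _ hU, one_mulVec]
    _ = -(Huu⁻¹ *ᵥ (Huw *ᵥ (w₁ - w₂))) := by rw [eq_neg_of_add_eq_zero_left hu, mulVec_neg]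
  have hSw : (Hww - C * Huu⁻¹ * Huw) *ᵥ (w₁ - w₂) = 0 := by
    rw [hu', mulVec_neg] at hw
    rw [← hw]
    simp only [sub_mulVec, mulVec_mulVec, Matrix.mul_assoc]
    abel
  rw [← sub_eq_zero, ← one_mulVec (w₁ - w₂), ← nonsing_inv_mul _ hS, ← mulVec_mulVec, hSw,
    mulVec_zero]

theorem isBlockSolution_schur (hU : IsUnit Huu.det) (hW : IsUnit Hww.det)
    (hSu : IsUnit (Huu - Huw * Hww⁻¹ * C).det) (hSw : IsUnit (Hww - C * Huu⁻¹ * Huw).det) :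
    IsBlockSolution Huu Huw C Hww p q
      ((Huu - Huw * Hww⁻¹ * C)⁻¹ *ᵥ ((Huw * Hww⁻¹) *ᵥ q - p))
      ((Hww - C * Huu⁻¹ * Huw)⁻¹ *ᵥ ((C * Huu⁻¹) *ᵥ p - q)) := by
  -- Each Schur formula extends to a solution; the solutions share their `w`-component.
  have hleft := isBlockSolution_of_schur_left (p := p) (q := q) hW
    (u := (Huu - Huw * Hww⁻¹ * C)⁻¹ *ᵥ ((Huw * Hww⁻¹) *ᵥ q - p))
    (by rw [mulVec_mulVec, mul_nonsing_inv _ hSu, one_mulVec])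
  have hright := (isBlockSolution_of_schur_left (p := q) (q := p) hU
    (u := (Hww - C * Huu⁻¹ * Huw)⁻¹ *ᵥ ((C * Huu⁻¹) *ᵥ p - q))
    (by rw [mulVec_mulVec, mul_nonsing_inv _ hSw, one_mulVec])).swap
  rwa [hleft.eq_of_schur_right hU hSw hright] at hleft

end BlockSystem

theorem isBlockSolution_schur_of_posDef {m d : Type*} [Fintype m] [DecidableEq m] [Fintype d]
    [DecidableEq d] {Huu : Matrix m m ℝ} {Huw : Matrix m d ℝ} {Hww : Matrix d d ℝ}
    (hU : Huu.PosDef) (hW : (-Hww).PosDef) (p : m → ℝ) (q : d → ℝ) :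
    IsBlockSolution Huu Huw Huwᵀ Hww p q
      ((Huu - Huw * Hww⁻¹ * Huwᵀ)⁻¹ *ᵥ ((Huw * Hww⁻¹) *ᵥ q - p))
      ((Hww - Huwᵀ * Huu⁻¹ * Huw)⁻¹ *ᵥ ((Huwᵀ * Huu⁻¹) *ᵥ p - q)) := by
  have hSu : (Huu - Huw * Hww⁻¹ * Huwᵀ).PosDef := by
    rw [← neg_neg Hww, Matrix.neg_nonsing_inv, Matrix.mul_neg, Matrix.neg_mul, sub_neg_eq_add]
    simpa using hU.add_posSemidef (hW.inv.posSemidef.mul_mul_conjTranspose_same Huw)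
  have hSw : (-(Hww - Huwᵀ * Huu⁻¹ * Huw)).PosDef := by
    rw [neg_sub, sub_eq_neg_add]
    simpa using hW.add_posSemidef (hU.inv.posSemidef.conjTranspose_mul_mul_same Huw)
  exact isBlockSolution_schur hU.det_pos.ne'.isUnit
    ((isUnit_det_neg_iff _).mp hW.det_pos.ne'.isUnit) hSu.det_pos.ne'.isUnit
    ((isUnit_det_neg_iff _).mp hSw.det_pos.ne'.isUnit)

section BlockQuadratic

variable {R : Type*} [CommRing R] {m d : Type*} [Fintype m] [Fintype d]

def blockQuadratic (Huu : Matrix m m R) (Huw : Matrix m d R) (Hww : Matrix d d R)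
    (p : m → R) (q : d → R) (u : m → R) (w : d → R) : R :=
  u ⬝ᵥ Huu *ᵥ u + 2 * (u ⬝ᵥ Huw *ᵥ w) + w ⬝ᵥ Hww *ᵥ w + 2 * (u ⬝ᵥ p) + 2 * (w ⬝ᵥ q)

variable {Huu : Matrix m m R} {Huw : Matrix m d R} {Hww : Matrix d d R} {p : m → R} {q : d → R}

theorem blockQuadratic_sub_left (hU : Huu.IsSymm) {u₀ : m → R} {w : d → R}
    (h : Huu *ᵥ u₀ + Huw *ᵥ w + p = 0) (u : m → R) :
    blockQuadratic Huu Huw Hww p q u w - blockQuadratic Huu Huw Hww p q u₀ w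
      = (u - u₀) ⬝ᵥ Huu *ᵥ (u - u₀) := by
  rw [add_assoc] at h
  rw [← hU.quadratic_sub_of_mulVec_add_eq_zero h u]
  simp only [blockQuadratic, dotProduct_add]
  ring

theorem blockQuadratic_sub_right (hW : Hww.IsSymm) {u : m → R} {w₀ : d → R}
    (h : Huwᵀ *ᵥ u + Hww *ᵥ w₀ + q = 0) (w : d → R) :
    blockQuadratic Huu Huw Hww p q u w - blockQuadratic Huu Huw Hww p q u w₀
      = (w - w₀) ⬝ᵥ Hww *ᵥ (w - w₀) := by
  rw [add_comm (Huwᵀ *ᵥ u), add_assoc] at h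
  rw [← hW.quadratic_sub_of_mulVec_add_eq_zero h w]
  simp only [blockQuadratic, dotProduct_add, dotProduct_transpose_mulVec]
  ring

end BlockQuadratic

theorem blockQuadratic_isSaddle {m d : Type*} [Fintype m] [Fintype d]
    {Huu : Matrix m m ℝ} {Huw : Matrix m d ℝ} {Hww : Matrix d d ℝ} {p : m → ℝ} {q : d → ℝ}
    (hU : Huu.PosSemidef) (hW : (-Hww).PosSemidef) {u₀ : m → ℝ} {w₀ : d → ℝ}
    (h : IsBlockSolution Huu Huw Huwᵀ Hww p q u₀ w₀) (u : m → ℝ) (w : d → ℝ) :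
    blockQuadratic Huu Huw Hww p q u₀ w ≤ blockQuadratic Huu Huw Hww p q u₀ w₀ ∧
      blockQuadratic Huu Huw Hww p q u₀ w₀ ≤ blockQuadratic Huu Huw Hww p q u w₀ := by
  have hWs : Hww.IsSymm := by
    simpa using (isHermitian_iff_isSymm.mp hW.isHermitian).neg
  have hw := hW.dotProduct_mulVec_nonneg (w - w₀)
  have hu := hU.dotProduct_mulVec_nonneg (u - u₀)
  rw [star_trivial, neg_mulVec, dotProduct_neg, neg_nonneg] at hw
  rw [star_trivial] at hu
  constructor
  · linarith [blockQuadratic_sub_right (Huu := Huu) (p := p) hWs h.2 w]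
  · linarith [blockQuadratic_sub_left (Hww := Hww) (q := q)
      (isHermitian_iff_isSymm.mp hU.isHermitian) h.1 u]

theorem lqPayoff_eq_blockQuadratic {n m d : Type*} [Fintype n] [Fintype m] [Fintype d]
    [DecidableEq d]
    (A : Matrix n n ℝ) (B : Matrix n m ℝ) (E : Matrix n d ℝ) (Q : Matrix n n ℝ)
    (R : Matrix m m ℝ) {P : Matrix n n ℝ} (hP : P.IsSymm) (α lam : ℝ) (g : n → ℝ) (z : ℝ)
    (wbar : d → ℝ) (x : n → ℝ) (u : m → ℝ) (w : d → ℝ) :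
    x ⬝ᵥ (Q *ᵥ x) + u ⬝ᵥ (R *ᵥ u) - lam * ((w - wbar) ⬝ᵥ (w - wbar))
      + α * ((A *ᵥ x + B *ᵥ u + E *ᵥ w) ⬝ᵥ (P *ᵥ (A *ᵥ x + B *ᵥ u + E *ᵥ w))
          + g ⬝ᵥ (A *ᵥ x + B *ᵥ u + E *ᵥ w) + z)
    = x ⬝ᵥ (Q *ᵥ x) - lam * (wbar ⬝ᵥ wbar)
        + α * ((A *ᵥ x) ⬝ᵥ (P *ᵥ (A *ᵥ x)) + g ⬝ᵥ (A *ᵥ x) + z)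
      + blockQuadratic (R + α • (Bᵀ * P * B)) (α • (Bᵀ * P * E))
          (α • (Eᵀ * P * E) - lam • 1)
          ((α • (Aᵀ * P * B))ᵀ *ᵥ x + (2⁻¹ : ℝ) • α • (Bᵀ *ᵥ g))
          ((α • (Aᵀ * P * E))ᵀ *ᵥ x + (2⁻¹ : ℝ) • (α • (Eᵀ *ᵥ g) + (2 * lam) • wbar)) u w := by
  have hBA := hP.dotProduct_mulVec_comm_s13 (A *ᵥ x) (B *ᵥ u)
  have hEA := hP.dotProduct_mulVec_comm_s13 (A *ᵥ x) (E *ᵥ w)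
  have hEB := hP.dotProduct_mulVec_comm_s13 (E *ᵥ w) (B *ᵥ u)
  simp only [blockQuadratic, transpose_smul, transpose_mul, transpose_transpose, hP.eq,
    add_mulVec, sub_mulVec, smul_mulVec, ← mulVec_mulVec, one_mulVec, mulVec_add,
    dotProduct_add, add_dotProduct, dotProduct_sub, sub_dotProduct, dotProduct_smul,
    smul_eq_mul, dotProduct_transpose_mulVec]
  simp only [dotProduct_comm (P *ᵥ _), dotProduct_comm wbar w]
  linear_combination α * (hBA + hEA + hEB)

theorem feedback_eq_inv_mulVec {K : Type*} [Field K] {k j n : Type*} [Fintype k]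
    [DecidableEq k] [Fintype j] [Fintype n] (S : Matrix k k K) (M : Matrix k j K)
    (Xu : Matrix k n K) (Xw : Matrix j n K) (Gu : k → K) (Gw : j → K) (x : n → K) :
    (S⁻¹ * (M * Xw - Xu)) *ᵥ x + (-(1 : K) / 2) • (S⁻¹ *ᵥ (Gu - M *ᵥ Gw))
      = S⁻¹ *ᵥ (M *ᵥ (Xw *ᵥ x + (2⁻¹ : K) • Gw) - (Xu *ᵥ x + (2⁻¹ : K) • Gu)) := by
  simp only [Matrix.mul_sub, sub_mulVec, mulVec_sub, mulVec_add, mulVec_smul, mulVec_mulVec,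
    smul_sub]
  module

theorem stmt13_general {n m d : ℕ}
    (A : Matrix (Fin n) (Fin n) ℝ) (B : Matrix (Fin n) (Fin m) ℝ)
    (E : Matrix (Fin n) (Fin d) ℝ)
    (Q : Matrix (Fin n) (Fin n) ℝ) (R : Matrix (Fin m) (Fin m) ℝ)
    (α lam : ℝ) (hα : α ∈ Set.Ioo (0 : ℝ) 1)
    (hR : R.PosDef)
    (P : Matrix (Fin n) (Fin n) ℝ) (hP : P.PosSemidef)
    (hpd : (lam • (1 : Matrix (Fin d) (Fin d) ℝ) - α • (Eᵀ * P * E)).PosDef)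
    (g : Fin n → ℝ) (z : ℝ) (wbar : Fin d → ℝ)
    (x : Fin n → ℝ) (f : (Fin m → ℝ) → (Fin d → ℝ) → ℝ)
    (hf : f = fun u w => x ⬝ᵥ (Q *ᵥ x) + u ⬝ᵥ (R *ᵥ u)
      - lam * ((w - wbar) ⬝ᵥ (w - wbar))
      + α * ((A *ᵥ x + B *ᵥ u + E *ᵥ w) ⬝ᵥ (P *ᵥ (A *ᵥ x + B *ᵥ u + E *ᵥ w))
          + g ⬝ᵥ (A *ᵥ x + B *ᵥ u + E *ᵥ w) + z))
    -- the blocks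
    (Hxu : Matrix (Fin n) (Fin m) ℝ)
    (Hxw : Matrix (Fin n) (Fin d) ℝ) (Huu : Matrix (Fin m) (Fin m) ℝ)
    (Huw : Matrix (Fin m) (Fin d) ℝ) (Hww : Matrix (Fin d) (Fin d) ℝ)
    (Gu : Fin m → ℝ) (Gw : Fin d → ℝ)
    (hHxu : Hxu = α • (Aᵀ * P * B))
    (hHxw : Hxw = α • (Aᵀ * P * E)) (hHuu : Huu = R + α • (Bᵀ * P * B))
    (hHuw : Huw = α • (Bᵀ * P * E))
    (hHww : Hww = α • (Eᵀ * P * E) - lam • (1 : Matrix (Fin d) (Fin d) ℝ))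
    (hGu : Gu = α • (Bᵀ *ᵥ g)) (hGw : Gw = α • (Eᵀ *ᵥ g) + (2 * lam) • wbar)
    -- the saddle point
    (K : Matrix (Fin m) (Fin n) ℝ) (r : Fin m → ℝ)
    (L : Matrix (Fin d) (Fin n) ℝ) (l : Fin d → ℝ)
    (hK : K = (Huu - Huw * Hww⁻¹ * Huwᵀ)⁻¹ * (Huw * Hww⁻¹ * Hxwᵀ - Hxuᵀ))
    (hr : r = (-(1 : ℝ) / 2) • ((Huu - Huw * Hww⁻¹ * Huwᵀ)⁻¹ *ᵥ
      (Gu - (Huw * Hww⁻¹) *ᵥ Gw)))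
    (hL : L = (Hww - Huwᵀ * Huu⁻¹ * Huw)⁻¹ * (Huwᵀ * Huu⁻¹ * Hxuᵀ - Hxwᵀ))
    (hl : l = (-(1 : ℝ) / 2) • ((Hww - Huwᵀ * Huu⁻¹ * Huw)⁻¹ *ᵥ
      (Gw - (Huwᵀ * Huu⁻¹) *ᵥ Gu)))
    (ustar : Fin m → ℝ) (hustar : ustar = K *ᵥ x + r)
    (wstar : Fin d → ℝ) (hwstar : wstar = L *ᵥ x + l) :
    ∀ (u : Fin m → ℝ) (w : Fin d → ℝ),
      f ustar w ≤ f ustar wstar ∧ f ustar wstar ≤ f u wstar := by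
  obtain ⟨hα0, -⟩ := hα
  have hPs : P.IsSymm := isHermitian_iff_isSymm.mp hP.isHermitian
  have hBPB : (Bᵀ * P * B).PosSemidef := by simpa using hP.conjTranspose_mul_mul_same B
  have hUpd : Huu.PosDef := hHuu ▸ hR.add_posSemidef (hBPB.smul hα0.le)
  have hWpd : (-Hww).PosDef := by rwa [hHww, neg_sub]
  set p : Fin m → ℝ := Hxuᵀ *ᵥ x + (2⁻¹ : ℝ) • Gu
  set q : Fin d → ℝ := Hxwᵀ *ᵥ x + (2⁻¹ : ℝ) • Gw
  have hsol : IsBlockSolution Huu Huw Huwᵀ Hww p q ustar wstar := by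
    rw [hustar, hwstar, hK, hr, hL, hl, feedback_eq_inv_mulVec, feedback_eq_inv_mulVec]
    exact isBlockSolution_schur_of_posDef hUpd hWpd p q
  have hf' : ∀ u w, f u w = x ⬝ᵥ (Q *ᵥ x) - lam * (wbar ⬝ᵥ wbar)
      + α * ((A *ᵥ x) ⬝ᵥ (P *ᵥ (A *ᵥ x)) + g ⬝ᵥ (A *ᵥ x) + z)
      + blockQuadratic Huu Huw Hww p q u w := by
    intro u w
    subst hf hHuu hHuw hHww hHxu hHxw hGu hGw
    exact lqPayoff_eq_blockQuadratic A B E Q R hPs α lam g z wbar x u w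
  intro u w
  simpa only [hf', add_le_add_iff_left] using
    blockQuadratic_isSaddle hUpd.posSemidef hWpd.posSemidef hsol u w

/-- `(u*, w*) = (Kx + r, Lx + l)` is a saddle point of the one-step payoff
`f(u,w) = xᵀQx + uᵀRu − λ‖w−w̄‖² + α[(Ax+Bu+Ew)ᵀP(Ax+Bu+Ew) + gᵀ(Ax+Bu+Ew) + z]`. -/
theorem stmt13 {n m d : ℕ}
    (A : Matrix (Fin n) (Fin n) ℝ) (B : Matrix (Fin n) (Fin m) ℝ)
    (E : Matrix (Fin n) (Fin d) ℝ)
    (Q : Matrix (Fin n) (Fin n) ℝ) (R : Matrix (Fin m) (Fin m) ℝ)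
    (α lam : ℝ) (hα : α ∈ Set.Ioo (0 : ℝ) 1) (hlam : 0 < lam)
    (hQ : Q.PosSemidef) (hR : R.PosDef)
    (P : Matrix (Fin n) (Fin n) ℝ) (hP : P.PosSemidef)
    (hpd : (lam • (1 : Matrix (Fin d) (Fin d) ℝ) - α • (Eᵀ * P * E)).PosDef)
    (g : Fin n → ℝ) (z : ℝ) (wbar : Fin d → ℝ)
    (x : Fin n → ℝ) (f : (Fin m → ℝ) → (Fin d → ℝ) → ℝ)
    (hf : f = fun u w => x ⬝ᵥ (Q *ᵥ x) + u ⬝ᵥ (R *ᵥ u)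
      - lam * ((w - wbar) ⬝ᵥ (w - wbar))
      + α * ((A *ᵥ x + B *ᵥ u + E *ᵥ w) ⬝ᵥ (P *ᵥ (A *ᵥ x + B *ᵥ u + E *ᵥ w))
          + g ⬝ᵥ (A *ᵥ x + B *ᵥ u + E *ᵥ w) + z))
    -- the blocks
    (Hxx : Matrix (Fin n) (Fin n) ℝ) (Hxu : Matrix (Fin n) (Fin m) ℝ)
    (Hxw : Matrix (Fin n) (Fin d) ℝ) (Huu : Matrix (Fin m) (Fin m) ℝ)
    (Huw : Matrix (Fin m) (Fin d) ℝ) (Hww : Matrix (Fin d) (Fin d) ℝ)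
    (Gu : Fin m → ℝ) (Gw : Fin d → ℝ)
    (hHxx : Hxx = Q + α • (Aᵀ * P * A)) (hHxu : Hxu = α • (Aᵀ * P * B))
    (hHxw : Hxw = α • (Aᵀ * P * E)) (hHuu : Huu = R + α • (Bᵀ * P * B))
    (hHuw : Huw = α • (Bᵀ * P * E))
    (hHww : Hww = α • (Eᵀ * P * E) - lam • (1 : Matrix (Fin d) (Fin d) ℝ))
    (hGu : Gu = α • (Bᵀ *ᵥ g)) (hGw : Gw = α • (Eᵀ *ᵥ g) + (2 * lam) • wbar)
    -- the saddle point
    (K : Matrix (Fin m) (Fin n) ℝ) (r : Fin m → ℝ)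
    (L : Matrix (Fin d) (Fin n) ℝ) (l : Fin d → ℝ)
    (hK : K = (Huu - Huw * Hww⁻¹ * Huwᵀ)⁻¹ * (Huw * Hww⁻¹ * Hxwᵀ - Hxuᵀ))
    (hr : r = (-(1 : ℝ) / 2) • ((Huu - Huw * Hww⁻¹ * Huwᵀ)⁻¹ *ᵥ
      (Gu - (Huw * Hww⁻¹) *ᵥ Gw)))
    (hL : L = (Hww - Huwᵀ * Huu⁻¹ * Huw)⁻¹ * (Huwᵀ * Huu⁻¹ * Hxuᵀ - Hxwᵀ))
    (hl : l = (-(1 : ℝ) / 2) • ((Hww - Huwᵀ * Huu⁻¹ * Huw)⁻¹ *ᵥ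
      (Gw - (Huwᵀ * Huu⁻¹) *ᵥ Gu)))
    (ustar : Fin m → ℝ) (hustar : ustar = K *ᵥ x + r)
    (wstar : Fin d → ℝ) (hwstar : wstar = L *ᵥ x + l) :
    ∀ (u : Fin m → ℝ) (w : Fin d → ℝ),
      f ustar w ≤ f ustar wstar ∧ f ustar wstar ≤ f u wstar :=
  stmt13_general A B E Q R α lam hα hR P hP hpd g z wbar x f hf Hxu Hxw Huu Huw Hww Gu Gw hHxu hHxw
    hHuu hHuw hHww hGu hGw K r L l hK hr hL hl ustar hustar wstar hwstar
end

section
/- Let A be n×n, B n×m, E n×d, Q symmetric n×n, R symmetric m×m, λ > 0, α ∈ (0,1), w̄ ∈ ℝ^d; let K be m×n, r ∈ ℝ^m, L be d×n, l ∈ ℝ^d, H a symmetric (n+m+d)×(n+m+d) matrix, G ∈ ℝ^{n+m+d}, and s ∈ ℝ. Define e(x) = [x; Kx+r; Lx+l] ∈ ℝ^{n+m+d}, W = blockdiag(Q, R, −λI_d), S = [A B E] (n×(n+m+d)), M = [I; K; L]·S ((n+m+d)×(n+m+d)), b = [0; r; l] and c = [0; 0; 2λw̄] in ℝ^{n+m+d},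 and d(x) = e(x)ᵀWe(x) + cᵀe(x) − λ‖w̄‖² + α[ e(Se(x))ᵀ H e(Se(x)) + Gᵀ e(Se(x)) + s ]. Then for all x ∈ ℝⁿ: (i) e(Se(x)) = M e(x) + b; and (ii) d(x) = e(x)ᵀ H⁺ e(x) + (G⁺)ᵀ e(x) + s⁺, where H⁺ = W + α MᵀHM, (G⁺)ᵀ = α(Gᵀ + 2bᵀH)M + cᵀ, and s⁺ = α(s + Gᵀb + bᵀHb) − λ‖w̄‖². -/
/-!
Since `u` and `w` are affine, the stacked vector at the successor state is an affine function of
`e(x)`. Substituting an affine map into a quadratic function with symmetric Hessian gives a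
quadratic function (symmetry merges the two cross terms `bᵀH Mv` and `(Mv)ᵀH b`), and the stage
cost is already quadratic in `e(x)`.
-/

open Matrix

namespace Matrix

variable {ι κ R : Type*} [Fintype ι] [Fintype κ] [CommRing R]

theorem add_dotProduct_mulVec_add_of_isSymm {H : Matrix ι ι R} (hH : H.IsSymm) (u b : ι → R) :
    (u + b) ⬝ᵥ (H *ᵥ (u + b)) = u ⬝ᵥ (H *ᵥ u) + 2 * ((b ᵥ* H) ⬝ᵥ u) + b ⬝ᵥ (H *ᵥ b) := by
  have hcross : u ⬝ᵥ (H *ᵥ b) = (b ᵥ* H) ⬝ᵥ u := by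
    rw [← vecMul_transpose, hH, dotProduct_comm]
  simp only [mulVec_add, dotProduct_add, add_dotProduct, hcross, ← dotProduct_mulVec]
  ring

theorem mulVec_dotProduct_mulVec_mulVec (M : Matrix ι κ R) (H : Matrix ι ι R) (v : κ → R) :
    (M *ᵥ v) ⬝ᵥ (H *ᵥ (M *ᵥ v)) = v ⬝ᵥ ((Mᵀ * H * M) *ᵥ v) := by
  rw [← mulVec_mulVec, ← mulVec_mulVec, dotProduct_mulVec v, vecMul_transpose]

theorem quadratic_comp_affine {H : Matrix ι ι R} (hH : H.IsSymm) (G : ι → R) (s : R)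
    (M : Matrix ι κ R) (b : ι → R) (v : κ → R) :
    (M *ᵥ v + b) ⬝ᵥ (H *ᵥ (M *ᵥ v + b)) + G ⬝ᵥ (M *ᵥ v + b) + s
      = v ⬝ᵥ ((Mᵀ * H * M) *ᵥ v) + ((G + (2 : R) • (b ᵥ* H)) ᵥ* M) ⬝ᵥ v
        + (s + G ⬝ᵥ b + b ⬝ᵥ (H *ᵥ b)) := by
  rw [add_dotProduct_mulVec_add_of_isSymm hH, mulVec_dotProduct_mulVec_mulVec]
  simp only [dotProduct_add, add_vecMul, add_dotProduct, smul_vecMul, smul_dotProduct,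
    smul_eq_mul, ← dotProduct_mulVec]
  ring

end Matrix

theorem sumElim_affine_eq_fromRows_mulVec_add {κ μ ν R : Type*} [Fintype ν] [CommRing R]
    [DecidableEq ν] (K : Matrix κ ν R) (r : κ → R) (L : Matrix μ ν R) (l : μ → R) (y : ν → R) :
    Sum.elim y (Sum.elim (K *ᵥ y + r) (L *ᵥ y + l))
      = fromRows 1 (fromRows K L) *ᵥ y + Sum.elim (0 : ν → R) (Sum.elim r l) := by
  ext (i | i | i) <;> simp [fromRows_mulVec]

theorem stmt14_general {n m d : ℕ}
    (lam α : ℝ)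
    (wbar : Fin d → ℝ)
    (K : Matrix (Fin m) (Fin n) ℝ) (r : Fin m → ℝ)
    (L : Matrix (Fin d) (Fin n) ℝ) (l : Fin d → ℝ)
    (H : Matrix (Fin n ⊕ (Fin m ⊕ Fin d)) (Fin n ⊕ (Fin m ⊕ Fin d)) ℝ)
    (hH : H.IsSymm)
    (G : Fin n ⊕ (Fin m ⊕ Fin d) → ℝ) (s : ℝ)
    -- the stacked data
    (e : (Fin n → ℝ) → Fin n ⊕ (Fin m ⊕ Fin d) → ℝ)
    (he : e = fun x => Sum.elim x (Sum.elim (K *ᵥ x + r) (L *ᵥ x + l)))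
    (W : Matrix (Fin n ⊕ (Fin m ⊕ Fin d)) (Fin n ⊕ (Fin m ⊕ Fin d)) ℝ)
    (S : Matrix (Fin n) (Fin n ⊕ (Fin m ⊕ Fin d)) ℝ)
    (M : Matrix (Fin n ⊕ (Fin m ⊕ Fin d)) (Fin n ⊕ (Fin m ⊕ Fin d)) ℝ)
    (hM : M = fromRows (1 : Matrix (Fin n) (Fin n) ℝ) (fromRows K L) * S)
    (b : Fin n ⊕ (Fin m ⊕ Fin d) → ℝ) (hb : b = Sum.elim (0 : Fin n → ℝ) (Sum.elim r l))
    (c : Fin n ⊕ (Fin m ⊕ Fin d) → ℝ)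
    (dfun : (Fin n → ℝ) → ℝ)
    (hdfun : dfun = fun x =>
      e x ⬝ᵥ (W *ᵥ e x) + c ⬝ᵥ e x - lam * (wbar ⬝ᵥ wbar)
        + α * (e (S *ᵥ e x) ⬝ᵥ (H *ᵥ e (S *ᵥ e x)) + G ⬝ᵥ e (S *ᵥ e x) + s))
    -- the updated parameters
    (Hplus : Matrix (Fin n ⊕ (Fin m ⊕ Fin d)) (Fin n ⊕ (Fin m ⊕ Fin d)) ℝ)
    (hHplus : Hplus = W + α • (Mᵀ * H * M))
    (Gplus : Fin n ⊕ (Fin m ⊕ Fin d) → ℝ)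
    (hGplus : Gplus = α • ((G + (2 : ℝ) • (b ᵥ* H)) ᵥ* M) + c)
    (splus : ℝ)
    (hsplus : splus = α * (s + G ⬝ᵥ b + b ⬝ᵥ (H *ᵥ b)) - lam * (wbar ⬝ᵥ wbar)) :
    (∀ x : Fin n → ℝ, e (S *ᵥ e x) = M *ᵥ e x + b) ∧
      ∀ x : Fin n → ℝ,
        dfun x = e x ⬝ᵥ (Hplus *ᵥ e x) + Gplus ⬝ᵥ e x + splus := by
  have successor : ∀ x, e (S *ᵥ e x) = M *ᵥ e x + b := fun x => by
    rw [hM, ← mulVec_mulVec, hb, he]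
    exact sumElim_affine_eq_fromRows_mulVec_add K r L l _
  refine ⟨successor, fun x => ?_⟩
  rw [hdfun]
  dsimp only
  rw [successor x, quadratic_comp_affine hH, hHplus, hGplus, hsplus]
  simp only [add_mulVec, dotProduct_add, smul_mulVec, dotProduct_smul, add_dotProduct,
    smul_dotProduct, smul_eq_mul]
  ring

/-- the algebraic core of the DR Q-learning update: with the stacked
vector `e(x) = [x; Kx+r; Lx+l]`, one has `e(Se(x)) = Me(x) + b`, and the Bellman target
`d(x)` is exactly quadratic in `e(x)` with updated parameters `(H⁺, G⁺, s⁺)`. -/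
theorem stmt14 {n m d : ℕ}
    (A : Matrix (Fin n) (Fin n) ℝ) (B : Matrix (Fin n) (Fin m) ℝ)
    (E : Matrix (Fin n) (Fin d) ℝ)
    (Q : Matrix (Fin n) (Fin n) ℝ) (R : Matrix (Fin m) (Fin m) ℝ)
    (hQ : Q.IsSymm) (hR : R.IsSymm)
    (lam α : ℝ) (hlam : 0 < lam) (hα : α ∈ Set.Ioo (0 : ℝ) 1)
    (wbar : Fin d → ℝ)
    (K : Matrix (Fin m) (Fin n) ℝ) (r : Fin m → ℝ)
    (L : Matrix (Fin d) (Fin n) ℝ) (l : Fin d → ℝ)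
    (H : Matrix (Fin n ⊕ (Fin m ⊕ Fin d)) (Fin n ⊕ (Fin m ⊕ Fin d)) ℝ)
    (hH : H.IsSymm)
    (G : Fin n ⊕ (Fin m ⊕ Fin d) → ℝ) (s : ℝ)
    -- the stacked data
    (e : (Fin n → ℝ) → Fin n ⊕ (Fin m ⊕ Fin d) → ℝ)
    (he : e = fun x => Sum.elim x (Sum.elim (K *ᵥ x + r) (L *ᵥ x + l)))
    (W : Matrix (Fin n ⊕ (Fin m ⊕ Fin d)) (Fin n ⊕ (Fin m ⊕ Fin d)) ℝ)
    (hW : W = fromBlocks Q 0 0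
      (fromBlocks R 0 0 ((-lam) • (1 : Matrix (Fin d) (Fin d) ℝ))))
    (S : Matrix (Fin n) (Fin n ⊕ (Fin m ⊕ Fin d)) ℝ)
    (hS : S = fromCols A (fromCols B E))
    (M : Matrix (Fin n ⊕ (Fin m ⊕ Fin d)) (Fin n ⊕ (Fin m ⊕ Fin d)) ℝ)
    (hM : M = fromRows (1 : Matrix (Fin n) (Fin n) ℝ) (fromRows K L) * S)
    (b : Fin n ⊕ (Fin m ⊕ Fin d) → ℝ) (hb : b = Sum.elim (0 : Fin n → ℝ) (Sum.elim r l))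
    (c : Fin n ⊕ (Fin m ⊕ Fin d) → ℝ)
    (hc : c = Sum.elim (0 : Fin n → ℝ) (Sum.elim (0 : Fin m → ℝ) ((2 * lam) • wbar)))
    (dfun : (Fin n → ℝ) → ℝ)
    (hdfun : dfun = fun x =>
      e x ⬝ᵥ (W *ᵥ e x) + c ⬝ᵥ e x - lam * (wbar ⬝ᵥ wbar)
        + α * (e (S *ᵥ e x) ⬝ᵥ (H *ᵥ e (S *ᵥ e x)) + G ⬝ᵥ e (S *ᵥ e x) + s))
    -- the updated parameters
    (Hplus : Matrix (Fin n ⊕ (Fin m ⊕ Fin d)) (Fin n ⊕ (Fin m ⊕ Fin d)) ℝ)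
    (hHplus : Hplus = W + α • (Mᵀ * H * M))
    (Gplus : Fin n ⊕ (Fin m ⊕ Fin d) → ℝ)
    (hGplus : Gplus = α • ((G + (2 : ℝ) • (b ᵥ* H)) ᵥ* M) + c)
    (splus : ℝ)
    (hsplus : splus = α * (s + G ⬝ᵥ b + b ⬝ᵥ (H *ᵥ b)) - lam * (wbar ⬝ᵥ wbar)) :
    (∀ x : Fin n → ℝ, e (S *ᵥ e x) = M *ᵥ e x + b) ∧
      ∀ x : Fin n → ℝ,
        dfun x = e x ⬝ᵥ (Hplus *ᵥ e x) + Gplus ⬝ᵥ e x + splus :=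
  stmt14_general lam α wbar K r L l H hH G s e he W S M hM b hb c dfun hdfun Hplus hHplus Gplus
    hGplus splus hsplus
end

section
/- Let P be a symmetric positive semidefinite n×n real matrix, and with matrices A (n×n), B (n×m), E (n×d), Q symmetric positive semidefinite, R symmetric positive definite, α ∈ (0,1), λ > 0 such that λI − αEᵀPE is positive definite, form the blocks H_xx = Q + αAᵀPA, H_xu = αAᵀPB, H_xw = αAᵀPE, H_uu = R + αBᵀPB, H_uw = αBᵀPE, H_ww = αEᵀPE − λI, and the gains K = (H_uu − H_uw H_ww⁻¹ H_uwᵀ)⁻¹(H_uw H_ww⁻¹ H_xwᵀ − H_xuᵀ) and L = (H_ww − H_uwᵀ H_uu⁻¹ H_uw)⁻¹(H_uwᵀ H_uu⁻¹ H_xuᵀ − H_xwᵀ). Let H denote the symmetric block matrix [[H_xx, H_xu, H_xw],[H_xuᵀ, H_uu, H_uw],[H_xwᵀ, H_uwᵀ, H_ww]] and T = [I; K; L]. Then Tᵀ H T = H_xx − [H_xu H_xw] [[H_uu, H_uw],[H_uwᵀ, H_ww]]⁻¹ [H_xuᵀ; H_xwᵀ]; that is, plugging the optimal feedback gains into the quadratic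 form recovers exactly the Riccati-type update of P. -/
/-!
Write `G = [[H_uu, H_uw], [H_uwᵀ, H_ww]]` and `C = [H_xu H_xw]`. Since `H_uu ≻ 0` and `H_ww ≺ 0`,
both Schur complements of `G` are definite, hence invertible, and the inverse of `G` written with
both Schur complements shows that the stacked gain is `[K; L] = -G⁻¹Cᵀ`. For any block matrix
`[[X, C], [D, G]]` and `S = -G⁻¹D` the second block row of `H [I; S]` vanishes, so
`[I; S]ᵀ H [I; S] = X - C G⁻¹ D`.
-/

open Matrix

namespace Matrix

variable {l m : Type*} [Fintype l] [Fintype m]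

section CommRing

variable {α : Type*} [CommRing α] [DecidableEq l] [DecidableEq m]

theorem inv_neg (A : Matrix l l α) : (-A)⁻¹ = -A⁻¹ := by
  by_cases h : IsUnit A.det
  · exact inv_eq_left_inv (by rw [neg_mul_neg, nonsing_inv_mul _ h])
  · have h' : ¬IsUnit (-A).det := by
      rwa [det_neg, IsUnit.mul_iff, and_iff_right ((isUnit_neg_one (α := α)).pow _)]
    rw [nonsing_inv_apply_not_isUnit _ h, nonsing_inv_apply_not_isUnit _ h', neg_zero]

theorem inv_fromBlocks_eq_of_isUnit_det_schur {A : Matrix l l α} {B : Matrix l m α}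
    {C : Matrix m l α} {D : Matrix m m α} (hA : IsUnit A.det) (hD : IsUnit D.det)
    (hSA : IsUnit (A - B * D⁻¹ * C).det) (hSD : IsUnit (D - C * A⁻¹ * B).det) :
    (fromBlocks A B C D)⁻¹ =
      fromBlocks (A - B * D⁻¹ * C)⁻¹ (-((A - B * D⁻¹ * C)⁻¹ * B * D⁻¹))
        (-((D - C * A⁻¹ * B)⁻¹ * C * A⁻¹)) (D - C * A⁻¹ * B)⁻¹ := by
  refine inv_eq_left_inv ?_
  rw [fromBlocks_multiply, ← fromBlocks_one]
  congr 1
  · rw [← nonsing_inv_mul _ hSA, Matrix.mul_sub]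
    simp only [Matrix.neg_mul, Matrix.mul_assoc, sub_eq_add_neg]
  · rw [Matrix.neg_mul, Matrix.mul_assoc _ D⁻¹ D, nonsing_inv_mul _ hD, Matrix.mul_one,
      add_neg_cancel]
  · rw [Matrix.neg_mul, Matrix.mul_assoc _ A⁻¹ A, nonsing_inv_mul _ hA, Matrix.mul_one,
      neg_add_cancel]
  · rw [← nonsing_inv_mul _ hSD, Matrix.mul_sub]
    simp only [Matrix.neg_mul, Matrix.mul_assoc, sub_eq_add_neg, add_comm]

theorem isUnit_det_fromBlocks_of_isUnit_det₁₁ {A : Matrix l l α} {B : Matrix l m α}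
    {C : Matrix m l α} {D : Matrix m m α} (hA : IsUnit A.det)
    (hSD : IsUnit (D - C * A⁻¹ * B).det) : IsUnit (fromBlocks A B C D).det := by
  let := invertibleOfIsUnitDet A hA
  rw [det_fromBlocks₁₁, invOf_eq_nonsing_inv]
  exact hA.mul hSD

theorem transpose_fromRows_mul_fromBlocks_mul_fromRows (X : Matrix l l α) (C : Matrix l m α)
    (D : Matrix m l α) (G : Matrix m m α) (hG : IsUnit G.det) :
    (fromRows (1 : Matrix l l α) (-(G⁻¹ * D)))ᵀ * fromBlocks X C D G *
        fromRows (1 : Matrix l l α) (-(G⁻¹ * D)) = X - C * G⁻¹ * D := by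
  have hHT : fromBlocks X C D G * fromRows (1 : Matrix l l α) (-(G⁻¹ * D)) =
      fromRows (X - C * G⁻¹ * D) 0 := by
    simp only [fromBlocks_mul_fromRows, Matrix.mul_one, Matrix.mul_neg, ← Matrix.mul_assoc,
      mul_nonsing_inv _ hG, Matrix.one_mul, sub_eq_add_neg, add_neg_cancel]
  rw [Matrix.mul_assoc, hHT, transpose_fromRows, fromCols_mul_fromRows, transpose_one,
    Matrix.one_mul, Matrix.mul_zero, add_zero]

end CommRing

namespace PosDef

variable {𝕜 : Type*} [Field 𝕜] [PartialOrder 𝕜] [StarRing 𝕜] [StarOrderedRing 𝕜]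
  {A : Matrix l l 𝕜} {D : Matrix m m 𝕜}

theorem sub_mul_inv_mul_conjTranspose_of_neg [DecidableEq m] (hA : A.PosDef) (hD : (-D).PosDef)
    (B : Matrix l m 𝕜) : (A - B * D⁻¹ * Bᴴ).PosDef := by
  rw [show A - B * D⁻¹ * Bᴴ = A + B * (-D)⁻¹ * Bᴴ by
    rw [inv_neg, Matrix.mul_neg, Matrix.neg_mul, sub_eq_add_neg]]
  exact hA.add_posSemidef (hD.inv.posSemidef.mul_mul_conjTranspose_same B)

theorem neg_sub_conjTranspose_mul_inv_mul [DecidableEq l] (hA : A.PosDef) (hD : (-D).PosDef)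
    (B : Matrix l m 𝕜) : (-(D - Bᴴ * A⁻¹ * B)).PosDef := by
  rw [neg_sub, sub_eq_add_neg]
  exact PosDef.posSemidef_add (hA.inv.posSemidef.conjTranspose_mul_mul_same B) hD

end PosDef

end Matrix

theorem stmt16_general {n m d : ℕ}
    (B : Matrix (Fin n) (Fin m) ℝ)
    (E : Matrix (Fin n) (Fin d) ℝ)
    (R : Matrix (Fin m) (Fin m) ℝ)
    (α lam : ℝ) (hα : α ∈ Set.Ioo (0 : ℝ) 1)
    (hR : R.PosDef)
    (P : Matrix (Fin n) (Fin n) ℝ) (hP : P.PosSemidef)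
    (hpd : (lam • (1 : Matrix (Fin d) (Fin d) ℝ) - α • (Eᵀ * P * E)).PosDef)
    -- the blocks
    (Hxx : Matrix (Fin n) (Fin n) ℝ) (Hxu : Matrix (Fin n) (Fin m) ℝ)
    (Hxw : Matrix (Fin n) (Fin d) ℝ) (Huu : Matrix (Fin m) (Fin m) ℝ)
    (Huw : Matrix (Fin m) (Fin d) ℝ) (Hww : Matrix (Fin d) (Fin d) ℝ)
    (hHuu : Huu = R + α • (Bᵀ * P * B))
    (hHww : Hww = α • (Eᵀ * P * E) - lam • (1 : Matrix (Fin d) (Fin d) ℝ))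
    -- the gains
    (K : Matrix (Fin m) (Fin n) ℝ)
    (hK : K = (Huu - Huw * Hww⁻¹ * Huwᵀ)⁻¹ * (Huw * Hww⁻¹ * Hxwᵀ - Hxuᵀ))
    (L : Matrix (Fin d) (Fin n) ℝ)
    (hL : L = (Hww - Huwᵀ * Huu⁻¹ * Huw)⁻¹ * (Huwᵀ * Huu⁻¹ * Hxuᵀ - Hxwᵀ))
    -- the full Q-function matrix and the stacked gain matrix
    (H : Matrix (Fin n ⊕ (Fin m ⊕ Fin d)) (Fin n ⊕ (Fin m ⊕ Fin d)) ℝ)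
    (hH : H = fromBlocks Hxx (fromCols Hxu Hxw) (fromRows Hxuᵀ Hxwᵀ)
      (fromBlocks Huu Huw Huwᵀ Hww))
    (T : Matrix (Fin n ⊕ (Fin m ⊕ Fin d)) (Fin n) ℝ)
    (hT : T = fromRows (1 : Matrix (Fin n) (Fin n) ℝ) (fromRows K L)) :
    Tᵀ * H * T = Hxx - fromCols Hxu Hxw *
      (fromBlocks Huu Huw Huwᵀ Hww)⁻¹ * (fromCols Hxu Hxw)ᵀ := by
  have isUnit_det {k : ℕ} {M : Matrix (Fin k) (Fin k) ℝ} (h : M.PosDef) : IsUnit M.det :=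
    h.det_pos.ne'.isUnit
  have isUnit_det_of_neg {k : ℕ} {M : Matrix (Fin k) (Fin k) ℝ} (h : (-M).PosDef) :
      IsUnit M.det :=
    (isUnit_iff_isUnit_det M).mp ((IsUnit.neg_iff M).mp h.isUnit)
  have hHuu' : Huu.PosDef := by
    rw [hHuu]
    exact hR.add_posSemidef (by simpa using (hP.conjTranspose_mul_mul_same B).smul hα.1.le)
  have hHww' : (-Hww).PosDef := by rwa [hHww, neg_sub]
  have hSuu := hHuu'.sub_mul_inv_mul_conjTranspose_of_neg hHww' Huw
  have hSww := hHuu'.neg_sub_conjTranspose_mul_inv_mul hHww' Huw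
  rw [conjTranspose_eq_transpose_of_trivial] at hSuu hSww
  have hgain : fromRows K L = -((fromBlocks Huu Huw Huwᵀ Hww)⁻¹ * (fromCols Hxu Hxw)ᵀ) := by
    rw [inv_fromBlocks_eq_of_isUnit_det_schur (isUnit_det hHuu') (isUnit_det_of_neg hHww')
      (isUnit_det hSuu) (isUnit_det_of_neg hSww), transpose_fromCols, fromBlocks_mul_fromRows,
      fromRows_neg, hK, hL]
    congr 1 <;> rw [Matrix.mul_sub] <;> simp only [Matrix.neg_mul, Matrix.mul_assoc] <;> abel
  rw [hH, hT, hgain, ← transpose_fromCols]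
  exact transpose_fromRows_mul_fromBlocks_mul_fromRows _ _ _ _
    (isUnit_det_fromBlocks_of_isUnit_det₁₁ (isUnit_det hHuu') (isUnit_det_of_neg hSww))

/-- plugging the optimal feedback gains `K`, `L` into the quadratic form of
the Q-function matrix `H` recovers the Riccati-type update:
`TᵀHT = H_xx − [H_xu H_xw] [[H_uu,H_uw],[H_uwᵀ,H_ww]]⁻¹ [H_xuᵀ; H_xwᵀ]`. -/
theorem stmt16 {n m d : ℕ}
    (A : Matrix (Fin n) (Fin n) ℝ) (B : Matrix (Fin n) (Fin m) ℝ)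
    (E : Matrix (Fin n) (Fin d) ℝ)
    (Q : Matrix (Fin n) (Fin n) ℝ) (R : Matrix (Fin m) (Fin m) ℝ)
    (α lam : ℝ) (hα : α ∈ Set.Ioo (0 : ℝ) 1) (hlam : 0 < lam)
    (hQ : Q.PosSemidef) (hR : R.PosDef)
    (P : Matrix (Fin n) (Fin n) ℝ) (hP : P.PosSemidef)
    (hpd : (lam • (1 : Matrix (Fin d) (Fin d) ℝ) - α • (Eᵀ * P * E)).PosDef)
    -- the blocks
    (Hxx : Matrix (Fin n) (Fin n) ℝ) (Hxu : Matrix (Fin n) (Fin m) ℝ)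
    (Hxw : Matrix (Fin n) (Fin d) ℝ) (Huu : Matrix (Fin m) (Fin m) ℝ)
    (Huw : Matrix (Fin m) (Fin d) ℝ) (Hww : Matrix (Fin d) (Fin d) ℝ)
    (hHxx : Hxx = Q + α • (Aᵀ * P * A)) (hHxu : Hxu = α • (Aᵀ * P * B))
    (hHxw : Hxw = α • (Aᵀ * P * E)) (hHuu : Huu = R + α • (Bᵀ * P * B))
    (hHuw : Huw = α • (Bᵀ * P * E))
    (hHww : Hww = α • (Eᵀ * P * E) - lam • (1 : Matrix (Fin d) (Fin d) ℝ))
    -- the gains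
    (K : Matrix (Fin m) (Fin n) ℝ)
    (hK : K = (Huu - Huw * Hww⁻¹ * Huwᵀ)⁻¹ * (Huw * Hww⁻¹ * Hxwᵀ - Hxuᵀ))
    (L : Matrix (Fin d) (Fin n) ℝ)
    (hL : L = (Hww - Huwᵀ * Huu⁻¹ * Huw)⁻¹ * (Huwᵀ * Huu⁻¹ * Hxuᵀ - Hxwᵀ))
    -- the full Q-function matrix and the stacked gain matrix
    (H : Matrix (Fin n ⊕ (Fin m ⊕ Fin d)) (Fin n ⊕ (Fin m ⊕ Fin d)) ℝ)
    (hH : H = fromBlocks Hxx (fromCols Hxu Hxw) (fromRows Hxuᵀ Hxwᵀ)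
      (fromBlocks Huu Huw Huwᵀ Hww))
    (T : Matrix (Fin n ⊕ (Fin m ⊕ Fin d)) (Fin n) ℝ)
    (hT : T = fromRows (1 : Matrix (Fin n) (Fin n) ℝ) (fromRows K L)) :
    Tᵀ * H * T = Hxx - fromCols Hxu Hxw *
      (fromBlocks Huu Huw Huwᵀ Hww)⁻¹ * (fromCols Hxu Hxw)ᵀ :=
  stmt16_general B E R α lam hα hR P hP hpd Hxx Hxu Hxw Huu Huw Hww hHuu hHww K hK L hL H hH T hT
end
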